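/- arXiv:1107.3238 — 6 statements merged into one kernel-verified Lean document; each statement's English description precedes it below -/
import Mathlib

section
/- (Maligranda's inequality.) Let X₀ and X₁ be Banach lattices of measurable functions on a common measure space, let 1 < p < ∞, and let f ∈ X₀^(p)+X₁^(p). Then for every t > 0, (K(t,|f|^p;X₀,X₁))^{1/p} ≤ K(t^{1/p},f;X₀^(p),X₁^(p)) ≤ 2^{1−1/p}·(K(t,|f|^p;X₀,X₁))^{1/p}. -/
open MeasureTheory

/-- A Banach lattice of (a.e.-equivalence classes of) real-valued measurable
functions on a measure space `(Ω, μ)`: a linear subspace of `Ω →ₘ[μ] ℝ` with a complete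
norm satisfying the lattice (ideal) property. -/
structure BanachFunctionLattice (Ω : Type*) [MeasurableSpace Ω] (μ : MeasureTheory.Measure Ω) where
  carrier : Set (Ω →ₘ[μ] ℝ)
  norm : (Ω →ₘ[μ] ℝ) → ℝ
  zero_mem : 0 ∈ carrier
  add_mem : ∀ {f g}, f ∈ carrier → g ∈ carrier → f + g ∈ carrier
  smul_mem : ∀ (c : ℝ) {f}, f ∈ carrier → c • f ∈ carrier
  norm_nonneg : ∀ f ∈ carrier, 0 ≤ norm f
  norm_eq_zero_iff : ∀ f ∈ carrier, (norm f = 0 ↔ f = 0)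
  norm_add_le : ∀ f ∈ carrier, ∀ g ∈ carrier, norm (f + g) ≤ norm f + norm g
  norm_smul : ∀ (c : ℝ), ∀ f ∈ carrier, norm (c • f) = |c| * norm f
  ideal_mem : ∀ f ∈ carrier, ∀ g : (Ω →ₘ[μ] ℝ), |g| ≤ |f| → g ∈ carrier
  ideal_norm_le : ∀ f ∈ carrier, ∀ g : (Ω →ₘ[μ] ℝ), |g| ≤ |f| → norm g ≤ norm f
  complete : ∀ u : ℕ → (Ω →ₘ[μ] ℝ), (∀ n, u n ∈ carrier) →
    (∀ ε > 0, ∃ N, ∀ m ≥ N, ∀ n ≥ N, norm (u m - u n) < ε) →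
    ∃ f ∈ carrier, ∀ ε > 0, ∃ N, ∀ n ≥ N, norm (u n - f) < ε

variable {Ω : Type*} [MeasurableSpace Ω] {μ : MeasureTheory.Measure Ω}

/-- The a.e.-equivalence class of `ω ↦ |f ω| ^ p` (real power). -/
noncomputable def absRpow (p : ℝ) (f : Ω →ₘ[μ] ℝ) : Ω →ₘ[μ] ℝ :=
  AEEqFun.mk (fun ω => |f ω| ^ p)
    (((by measurability : Measurable fun x : ℝ => |x| ^ p).comp_aemeasurable
      f.aemeasurable).aestronglyMeasurable)

/-- A (not necessarily complete) normed function space: the data of a carrier and a norm.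
Used to speak about `p`-convexifications without re-proving all the axioms. -/
structure FunctionSpace (Ω : Type*) [MeasurableSpace Ω] (μ : MeasureTheory.Measure Ω) where
  carrier : Set (Ω →ₘ[μ] ℝ)
  norm : (Ω →ₘ[μ] ℝ) → ℝ

/-- The carrier-and-norm data underlying a Banach function lattice. -/
def BanachFunctionLattice.toFunctionSpace (X : BanachFunctionLattice Ω μ) :
    FunctionSpace Ω μ := ⟨X.carrier, X.norm⟩

/-- The `p`-convexification `X^(p)`: all `f` with `|f|^p ∈ X`, with norm `‖|f|^p‖_X^(1/p)`. -/
noncomputable def pConv (X : BanachFunctionLattice Ω μ) (p : ℝ) : FunctionSpace Ω μ where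
  carrier := {f | absRpow p f ∈ X.carrier}
  norm := fun f => (X.norm (absRpow p f)) ^ (1 / p)

/-- The sum space `X₀ + X₁` (as a set). -/
def sumSet (A₀ A₁ : FunctionSpace Ω μ) : Set (Ω →ₘ[μ] ℝ) :=
  {f | ∃ a₀ ∈ A₀.carrier, ∃ a₁ ∈ A₁.carrier, f = a₀ + a₁}

/-- The Peetre `K`-functional `K(t, f; A₀, A₁)`. -/
noncomputable def Kfun (A₀ A₁ : FunctionSpace Ω μ) (t : ℝ) (f : Ω →ₘ[μ] ℝ) : ℝ :=
  sInf {r | ∃ a₀ ∈ A₀.carrier, ∃ a₁ ∈ A₁.carrier,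
    f = a₀ + a₁ ∧ r = A₀.norm a₀ + t * A₁.norm a₁}

/-- The norm of the sum space `X₀ + X₁`, namely `K(1, ·)`. -/
noncomputable def sumNorm (A₀ A₁ : FunctionSpace Ω μ) (f : Ω →ₘ[μ] ℝ) : ℝ :=
  Kfun A₀ A₁ 1 f

/-- The functional `D(t, f; A₀, A₁)`, the analogue of the `K`-functional restricted to
disjointly supported decompositions. -/
noncomputable def Dfun (A₀ A₁ : FunctionSpace Ω μ) (t : ℝ) (f : Ω →ₘ[μ] ℝ) : ℝ :=
  sInf {r | ∃ a₀ ∈ A₀.carrier, ∃ a₁ ∈ A₁.carrier,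
    f = a₀ + a₁ ∧ a₀ * a₁ = 0 ∧ r = A₀.norm a₀ + t * A₁.norm a₁}

/-- `T : (A₀, A₁) → (A₀, A₁)` is a bounded linear operator: `T` is linear on `A₀ + A₁`
and its restriction to each `Aⱼ` is a bounded operator from `Aⱼ` into itself. -/
def IsBoundedCoupleOperator (A₀ A₁ : FunctionSpace Ω μ) (T : (Ω →ₘ[μ] ℝ) → (Ω →ₘ[μ] ℝ)) :
    Prop :=
  (∀ f ∈ sumSet A₀ A₁, ∀ g ∈ sumSet A₀ A₁, T (f + g) = T f + T g) ∧
  (∀ (c : ℝ), ∀ f ∈ sumSet A₀ A₁, T (c • f) = c • T f) ∧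
  (∀ f ∈ A₀.carrier, T f ∈ A₀.carrier) ∧
  (∀ f ∈ A₁.carrier, T f ∈ A₁.carrier) ∧
  (∃ C₀ : ℝ, ∀ f ∈ A₀.carrier, A₀.norm (T f) ≤ C₀ * A₀.norm f) ∧
  (∃ C₁ : ℝ, ∀ f ∈ A₁.carrier, A₁.norm (T f) ≤ C₁ * A₁.norm f)

/-- `‖T‖_{Aⱼ → Aⱼ} ≤ C` for `j = 0, 1`. -/
def CoupleOperatorNormLE (A₀ A₁ : FunctionSpace Ω μ) (T : (Ω →ₘ[μ] ℝ) → (Ω →ₘ[μ] ℝ))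
    (C : ℝ) : Prop :=
  (∀ f ∈ A₀.carrier, A₀.norm (T f) ≤ C * A₀.norm f) ∧
  (∀ f ∈ A₁.carrier, A₁.norm (T f) ≤ C * A₁.norm f)

/-- `T` is a positive operator on `A₀ + A₁`. -/
def IsPositiveOn (A₀ A₁ : FunctionSpace Ω μ) (T : (Ω →ₘ[μ] ℝ) → (Ω →ₘ[μ] ℝ)) : Prop :=
  ∀ h ∈ sumSet A₀ A₁, 0 ≤ h → 0 ≤ T h

/-- `(A₀, A₁)` is a Calderón couple. -/
def IsCalderonCouple (A₀ A₁ : FunctionSpace Ω μ) : Prop :=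
  ∀ f ∈ sumSet A₀ A₁, ∀ g ∈ sumSet A₀ A₁,
    (∀ t > 0, Kfun A₀ A₁ t g ≤ Kfun A₀ A₁ t f) →
    ∃ T, IsBoundedCoupleOperator A₀ A₁ T ∧ T f = g

/-- `(A₀, A₁)` is a `C`-Calderón couple. -/
def IsCCalderonCouple (A₀ A₁ : FunctionSpace Ω μ) (C : ℝ) : Prop :=
  ∀ f ∈ sumSet A₀ A₁, ∀ g ∈ sumSet A₀ A₁,
    (∀ t > 0, Kfun A₀ A₁ t g ≤ Kfun A₀ A₁ t f) →
    ∃ T, IsBoundedCoupleOperator A₀ A₁ T ∧ T f = g ∧ CoupleOperatorNormLE A₀ A₁ T C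

/-- `(A₀, A₁)` is a positive Calderón couple. -/
def IsPositiveCalderonCouple (A₀ A₁ : FunctionSpace Ω μ) : Prop :=
  ∀ f ∈ sumSet A₀ A₁, ∀ g ∈ sumSet A₀ A₁, 0 ≤ f → 0 ≤ g →
    (∀ t > 0, Kfun A₀ A₁ t g ≤ Kfun A₀ A₁ t f) →
    ∃ T, IsBoundedCoupleOperator A₀ A₁ T ∧ IsPositiveOn A₀ A₁ T ∧ T f = g

/-- `(A₀, A₁)` is a positive `C`-Calderón couple. -/
def IsPositiveCCalderonCouple (A₀ A₁ : FunctionSpace Ω μ) (C : ℝ) : Prop :=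
  ∀ f ∈ sumSet A₀ A₁, ∀ g ∈ sumSet A₀ A₁, 0 ≤ f → 0 ≤ g →
    (∀ t > 0, Kfun A₀ A₁ t g ≤ Kfun A₀ A₁ t f) →
    ∃ T, IsBoundedCoupleOperator A₀ A₁ T ∧ IsPositiveOn A₀ A₁ T ∧ T f = g ∧
      CoupleOperatorNormLE A₀ A₁ T C

/-- A set `S` of (classes of) measurable functions has the Least Upper Bound Property:
every nonempty subset of `S` bounded above by an element of `S` has a least upper bound
in `S` (for the a.e. pointwise order). -/
def HasLUBP (S : Set (Ω →ₘ[μ] ℝ)) : Prop :=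
  ∀ A ⊆ S, A.Nonempty → (∃ b ∈ S, ∀ a ∈ A, a ≤ b) →
    ∃ y ∈ S, (∀ a ∈ A, a ≤ y) ∧ ∀ z ∈ S, (∀ a ∈ A, a ≤ z) → y ≤ z

/-
Both bounds transport decompositions between `f` and `|f|^p`, using only the lattice (ideal)
property of `X₀` and `X₁` and the Riesz decomposition `0 ≤ g ≤ x + y ⟹ g = g ⊓ x + (g - g ⊓ x)`.

Lower bound: if `f = c₀ + c₁`, convexity of `s ↦ s^p` gives, for all weights `a, b > 0`,
`|f|^p ≤ (a+b)^(p-1) (|c₀|^p / a^(p-1) + |c₁|^p / b^(p-1))`, hence a splitting of `|f|^p` in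
`X₀ + X₁`; the weights `a = ‖|c₀|^p‖^(1/p)`, `b = (t ‖|c₁|^p‖)^(1/p)` turn the resulting bound
into `K(t, |f|^p) ≤ (‖c₀‖ + t^(1/p) ‖c₁‖)^p`.

Upper bound: if `|f|^p = b₀ + b₁`, let `m = |f|^p ⊓ |b₀|` and `c₀ = (m / |f|^p)^(1/p) f`,
`c₁ = f - c₀`. Then `|c₀|^p = m ≤ |b₀|`, and superadditivity of `s ↦ s^p` gives
`|c₁|^p ≤ |f|^p - m ≤ |b₁|`. The constant comes from `x^(1/p) + y^(1/p) ≤ 2^(1-1/p) (x+y)^(1/p)`.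
-/

open Topology

namespace Real

variable {p : ℝ}

theorem rpow_add_le_mul_rpow_div_add_rpow_div (hp : 1 ≤ p) {u v a b : ℝ} (hu : 0 ≤ u)
    (hv : 0 ≤ v) (ha : 0 < a) (hb : 0 < b) :
    (u + v) ^ p ≤ (a + b) ^ (p - 1) * (u ^ p / a ^ (p - 1) + v ^ p / b ^ (p - 1)) := by
  have hs : 0 < a + b := add_pos ha hb
  have key := (convexOn_rpow hp).2 (Set.mem_Ici.2 (by positivity : 0 ≤ (a + b) * u / a))
    (Set.mem_Ici.2 (by positivity : 0 ≤ (a + b) * v / b)) (div_pos ha hs).le (div_pos hb hs).le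
    (by field_simp)
  have hu' : a / (a + b) * ((a + b) * u / a) = u := by field_simp
  have hv' : b / (a + b) * ((a + b) * v / b) = v := by field_simp
  simp only [smul_eq_mul, hu', hv'] at key
  refine key.trans (le_of_eq ?_)
  rw [div_rpow (by positivity) ha.le, div_rpow (by positivity) hb.le, mul_rpow hs.le hu,
    mul_rpow hs.le hv, rpow_sub_one hs.ne', rpow_sub_one ha.ne', rpow_sub_one hb.ne']
  field_simp

theorem le_rpow_add_rpow_of_forall_le (hp : 1 ≤ p) {x A B : ℝ} (hA : 0 ≤ A) (hB : 0 ≤ B)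
    (h : ∀ a b : ℝ, 0 < a → 0 < b → x ≤ (a + b) ^ (p - 1) * (A / a ^ (p - 1) + B / b ^ (p - 1))) :
    x ≤ (A ^ (1 / p) + B ^ (1 / p)) ^ p := by
  have hp0 : 0 < p := by linarith
  have hroot : ∀ {C c : ℝ}, 0 ≤ C → C ^ (1 / p) < c → C / c ^ (p - 1) ≤ c := by
    intro C c hC hc
    have hc0 : 0 < c := (rpow_nonneg hC _).trans_lt hc
    rw [div_le_iff₀ (rpow_pos_of_pos hc0 _), ← rpow_one_add' hc0.le (by linarith)]
    calc C = (C ^ (1 / p)) ^ p := by rw [← rpow_mul hC, one_div_mul_cancel hp0.ne', rpow_one]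
      _ ≤ c ^ p := rpow_le_rpow (rpow_nonneg hC _) hc.le hp0.le
      _ = c ^ (1 + (p - 1)) := by ring_nf
  -- `A` or `B` may vanish, so the optimal weights `A ^ (1 / p)`, `B ^ (1 / p)` are shifted by `ε`.
  have hε : ∀ ε > 0, x ≤ (A ^ (1 / p) + B ^ (1 / p) + 2 * ε) ^ p := by
    intro ε hε
    set a := A ^ (1 / p) + ε
    set b := B ^ (1 / p) + ε
    have ha : 0 < a := by positivity
    have hb : 0 < b := by positivity
    calc x ≤ (a + b) ^ (p - 1) * (A / a ^ (p - 1) + B / b ^ (p - 1)) := h a b ha hb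
      _ ≤ (a + b) ^ (p - 1) * (a + b) := by
          gcongr
          exacts [hroot hA (by linarith), hroot hB (by linarith)]
      _ = (A ^ (1 / p) + B ^ (1 / p) + 2 * ε) ^ p := by
          rw [← rpow_add_one (by positivity), sub_add_cancel]
          congr 1
          simp only [a, b]
          ring
  have hcont : Continuous fun ε : ℝ => (A ^ (1 / p) + B ^ (1 / p) + 2 * ε) ^ p :=
    (continuous_rpow_const hp0.le).comp (by fun_prop)
  refine ge_of_tendsto (x := 𝓝[>] 0) ?_ (eventually_nhdsWithin_of_forall fun ε hε' => hε ε hε')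
  simpa using (hcont.tendsto 0).mono_left nhdsWithin_le_nhds

theorem rpow_one_div_add_rpow_one_div_le (hp : 1 ≤ p) {x y : ℝ} (hx : 0 ≤ x) (hy : 0 ≤ y) :
    x ^ (1 / p) + y ^ (1 / p) ≤ 2 ^ (1 - 1 / p) * (x + y) ^ (1 / p) := by
  have hp0 : 0 < p := by linarith
  have h := rpow_add_le_mul_rpow_div_add_rpow_div hp (rpow_nonneg hx (1 / p))
    (rpow_nonneg hy (1 / p)) one_pos one_pos
  rw [← rpow_mul hx, ← rpow_mul hy, one_div_mul_cancel hp0.ne', rpow_one, rpow_one, one_rpow,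
    div_one, div_one, one_add_one_eq_two] at h
  calc x ^ (1 / p) + y ^ (1 / p) = ((x ^ (1 / p) + y ^ (1 / p)) ^ p) ^ (1 / p) := by
        rw [← rpow_mul (by positivity), mul_one_div_cancel hp0.ne', rpow_one]
    _ ≤ (2 ^ (p - 1) * (x + y)) ^ (1 / p) := by gcongr
    _ = 2 ^ (1 - 1 / p) * (x + y) ^ (1 / p) := by
        rw [mul_rpow (by positivity) (by positivity), ← rpow_mul zero_le_two]
        congr 2
        field_simp

theorem abs_rpow_div_rpow_mul_rpow (hp : 0 < p) {m F : ℝ} (hm : 0 ≤ m) (hmF : m ≤ |F| ^ p) :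
    |(m / |F| ^ p) ^ (1 / p) * F| ^ p = m := by
  rcases eq_or_ne F 0 with rfl | hF
  · simp only [abs_zero, zero_rpow hp.ne'] at hmF ⊢
    simp [le_antisymm hmF hm, zero_rpow hp.ne']
  have hX : 0 < |F| ^ p := rpow_pos_of_pos (abs_pos.2 hF) _
  rw [abs_mul, abs_of_nonneg (by positivity), mul_rpow (by positivity) (abs_nonneg _),
    ← rpow_mul (by positivity), one_div_mul_cancel hp.ne', rpow_one, div_mul_cancel₀ _ hX.ne']

theorem abs_sub_rpow_div_rpow_mul_rpow_le (hp : 1 ≤ p) {m F : ℝ} (hm : 0 ≤ m)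
    (hmF : m ≤ |F| ^ p) : |F - (m / |F| ^ p) ^ (1 / p) * F| ^ p ≤ |F| ^ p - m := by
  have hp0 : 0 < p := by linarith
  rcases eq_or_ne F 0 with rfl | hF
  · simp only [abs_zero, zero_rpow hp0.ne'] at hmF ⊢
    simp [le_antisymm hmF hm, zero_rpow hp0.ne']
  have hX : 0 < |F| ^ p := rpow_pos_of_pos (abs_pos.2 hF) _
  set θ := m / |F| ^ p
  have hθ : 0 ≤ θ := by positivity
  have hθ1 : θ ≤ 1 := div_le_one_of_le₀ hmF hX.le
  set ρ := θ ^ (1 / p)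
  have hρ1 : ρ ≤ 1 := rpow_le_one hθ hθ1 (by positivity)
  have hρp : ρ ^ p = θ := by rw [← rpow_mul hθ, one_div_mul_cancel hp0.ne', rpow_one]
  have hsuper : (1 - ρ) ^ p + ρ ^ p ≤ 1 := by
    simpa using add_rpow_le_rpow_add (sub_nonneg.2 hρ1) (by positivity : 0 ≤ ρ) hp
  calc |F - ρ * F| ^ p = (1 - ρ) ^ p * |F| ^ p := by
        rw [← one_sub_mul, abs_mul, abs_of_nonneg (sub_nonneg.2 hρ1),
          mul_rpow (sub_nonneg.2 hρ1) (abs_nonneg _)]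
    _ ≤ (1 - θ) * |F| ^ p := by gcongr; linarith
    _ = |F| ^ p - m := by rw [sub_mul, one_mul, div_mul_cancel₀ _ hX.ne']

end Real

theorem exists_add_eq_of_le_add {α : Type*} [Lattice α] [AddCommGroup α] [AddLeftMono α]
    {g x y : α} (hg : 0 ≤ g) (hx : 0 ≤ x) (hy : 0 ≤ y) (h : g ≤ x + y) :
    ∃ b₀ b₁, g = b₀ + b₁ ∧ 0 ≤ b₀ ∧ b₀ ≤ x ∧ 0 ≤ b₁ ∧ b₁ ≤ y := by
  refine ⟨g ⊓ x, g - g ⊓ x, (add_sub_cancel _ _).symm, le_inf hg hx, inf_le_right,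
    sub_nonneg.2 inf_le_left, ?_⟩
  rw [sub_inf, sub_self]
  exact sup_le hy (sub_le_iff_le_add.2 (add_comm x y ▸ h))

namespace MeasureTheory.AEEqFun

instance {α β : Type*} [MeasurableSpace α] {μ : Measure α} [TopologicalSpace β] [Add β]
    [ContinuousAdd β] [Preorder β] [AddLeftMono β] : AddLeftMono (α →ₘ[μ] β) where
  elim c f g hfg := by
    change f ≤ g at hfg
    change c + f ≤ c + g
    rw [← coeFn_le] at hfg ⊢
    filter_upwards [hfg, coeFn_add c f, coeFn_add c g] with ω h hf hg
    simpa [hf, hg] using add_le_add_right h (c ω)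

end MeasureTheory.AEEqFun

theorem coeFn_absRpow (p : ℝ) (f : Ω →ₘ[μ] ℝ) :
    absRpow p f =ᵐ[μ] fun ω => |f ω| ^ p :=
  AEEqFun.coeFn_mk _ _

theorem absRpow_nonneg (p : ℝ) (f : Ω →ₘ[μ] ℝ) : 0 ≤ absRpow p f := by
  rw [← AEEqFun.coeFn_le]
  filter_upwards [coeFn_absRpow p f, AEEqFun.coeFn_zero (μ := μ) (β := ℝ)] with ω h h0
  rw [h, h0]
  exact Real.rpow_nonneg (abs_nonneg _) p

theorem exists_absRpow_eq_and_absRpow_sub_le {p : ℝ} (hp : 1 ≤ p) {f m : Ω →ₘ[μ] ℝ}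
    (hm : 0 ≤ m) (hmf : m ≤ absRpow p f) :
    ∃ c, absRpow p c = m ∧ absRpow p (f - c) ≤ absRpow p f - m := by
  have hp0 : 0 < p := by linarith
  have hρ : AEMeasurable (fun ω => (m ω / |f ω| ^ p) ^ (1 / p)) μ := by
    have := f.aemeasurable; have := m.aemeasurable; fun_prop
  set c : Ω →ₘ[μ] ℝ := AEEqFun.mk _ hρ.aestronglyMeasurable * f
  have hc : c =ᵐ[μ] fun ω => (m ω / |f ω| ^ p) ^ (1 / p) * f ω := by
    filter_upwards [AEEqFun.coeFn_mul (AEEqFun.mk _ hρ.aestronglyMeasurable) f,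
      AEEqFun.coeFn_mk _ hρ.aestronglyMeasurable] with ω h1 h2
    rw [h1, Pi.mul_apply, h2]
  have hm' : ∀ᵐ ω ∂μ, 0 ≤ m ω ∧ m ω ≤ |f ω| ^ p := by
    rw [← AEEqFun.coeFn_le] at hm hmf
    filter_upwards [hm, hmf, coeFn_absRpow p f, AEEqFun.coeFn_zero (μ := μ) (β := ℝ)]
      with ω h0 h1 h2 h3
    rw [h3] at h0
    exact ⟨h0, h2 ▸ h1⟩
  refine ⟨c, AEEqFun.ext ?_, ?_⟩
  · filter_upwards [coeFn_absRpow p c, hc, hm'] with ω h1 h2 h3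
    rw [h1, h2]
    exact Real.abs_rpow_div_rpow_mul_rpow hp0 h3.1 h3.2
  · rw [← AEEqFun.coeFn_le]
    filter_upwards [coeFn_absRpow p (f - c), AEEqFun.coeFn_sub f c, hc, hm',
      AEEqFun.coeFn_sub (absRpow p f) m, coeFn_absRpow p f] with ω h1 h2 h3 h4 h5 h6
    rw [h1, h5, h2, Pi.sub_apply, Pi.sub_apply, h3, h6]
    exact Real.abs_sub_rpow_div_rpow_mul_rpow_le hp h4.1 h4.2

namespace BanachFunctionLattice

variable (X : BanachFunctionLattice Ω μ) {g h : Ω →ₘ[μ] ℝ}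

theorem mem_of_nonneg_of_le_abs (hh : h ∈ X.carrier) (hg : 0 ≤ g) (hgh : g ≤ |h|) :
    g ∈ X.carrier :=
  X.ideal_mem h hh g (by rwa [abs_of_nonneg hg])

theorem norm_le_of_nonneg_of_le_abs (hh : h ∈ X.carrier) (hg : 0 ≤ g) (hgh : g ≤ |h|) :
    X.norm g ≤ X.norm h :=
  X.ideal_norm_le h hh g (by rwa [abs_of_nonneg hg])

end BanachFunctionLattice

theorem exists_decomp_of_le_abs_add_abs (X₀ X₁ : BanachFunctionLattice Ω μ)
    {g h₀ h₁ : Ω →ₘ[μ] ℝ} (hh₀ : h₀ ∈ X₀.carrier) (hh₁ : h₁ ∈ X₁.carrier) (hg : 0 ≤ g)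
    (hgh : g ≤ |h₀| + |h₁|) :
    ∃ b₀ ∈ X₀.carrier, ∃ b₁ ∈ X₁.carrier, g = b₀ + b₁ ∧ 0 ≤ b₀ ∧ 0 ≤ b₁ ∧
      X₀.norm b₀ ≤ X₀.norm h₀ ∧ X₁.norm b₁ ≤ X₁.norm h₁ := by
  obtain ⟨b₀, b₁, rfl, hb₀, hb₀h, hb₁, hb₁h⟩ :=
    exists_add_eq_of_le_add hg (abs_nonneg h₀) (abs_nonneg h₁) hgh
  exact ⟨b₀, X₀.mem_of_nonneg_of_le_abs hh₀ hb₀ hb₀h, b₁, X₁.mem_of_nonneg_of_le_abs hh₁ hb₁ hb₁h,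
    rfl, hb₀, hb₁, X₀.norm_le_of_nonneg_of_le_abs hh₀ hb₀ hb₀h,
    X₁.norm_le_of_nonneg_of_le_abs hh₁ hb₁ hb₁h⟩

theorem pConv_norm_nonneg (X : BanachFunctionLattice Ω μ) (p : ℝ) :
    ∀ f ∈ (pConv X p).carrier, 0 ≤ (pConv X p).norm f :=
  fun _ hf => Real.rpow_nonneg (X.norm_nonneg _ hf) _

section Kfunctional

variable {A₀ A₁ : FunctionSpace Ω μ} {t : ℝ} {f : Ω →ₘ[μ] ℝ}

theorem Kfun_le (hA₀ : ∀ a ∈ A₀.carrier, 0 ≤ A₀.norm a) (hA₁ : ∀ a ∈ A₁.carrier, 0 ≤ A₁.norm a)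
    (ht : 0 ≤ t) {a₀ a₁ : Ω →ₘ[μ] ℝ} (ha₀ : a₀ ∈ A₀.carrier) (ha₁ : a₁ ∈ A₁.carrier)
    (hf : f = a₀ + a₁) : Kfun A₀ A₁ t f ≤ A₀.norm a₀ + t * A₁.norm a₁ := by
  refine csInf_le ⟨0, ?_⟩ ⟨a₀, ha₀, a₁, ha₁, hf, rfl⟩
  rintro r ⟨b₀, hb₀, b₁, hb₁, -, rfl⟩
  exact add_nonneg (hA₀ b₀ hb₀) (mul_nonneg ht (hA₁ b₁ hb₁))

theorem le_Kfun {r : ℝ} (hf : f ∈ sumSet A₀ A₁)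
    (h : ∀ a₀ ∈ A₀.carrier, ∀ a₁ ∈ A₁.carrier, f = a₀ + a₁ → r ≤ A₀.norm a₀ + t * A₁.norm a₁) :
    r ≤ Kfun A₀ A₁ t f := by
  obtain ⟨a₀, ha₀, a₁, ha₁, hfa⟩ := hf
  refine le_csInf ⟨_, a₀, ha₀, a₁, ha₁, hfa, rfl⟩ ?_
  rintro r ⟨b₀, hb₀, b₁, hb₁, hfb, rfl⟩
  exact h b₀ hb₀ b₁ hb₁ hfb

theorem Kfun_nonneg (hf : f ∈ sumSet A₀ A₁) (hA₀ : ∀ a ∈ A₀.carrier, 0 ≤ A₀.norm a)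
    (hA₁ : ∀ a ∈ A₁.carrier, 0 ≤ A₁.norm a) (ht : 0 ≤ t) : 0 ≤ Kfun A₀ A₁ t f :=
  le_Kfun hf fun a₀ ha₀ a₁ ha₁ _ => add_nonneg (hA₀ a₀ ha₀) (mul_nonneg ht (hA₁ a₁ ha₁))

theorem le_mul_Kfun_rpow (hf : f ∈ sumSet A₀ A₁) (hA₀ : ∀ a ∈ A₀.carrier, 0 ≤ A₀.norm a)
    (hA₁ : ∀ a ∈ A₁.carrier, 0 ≤ A₁.norm a) (ht : 0 ≤ t) {x c q : ℝ} (hx : 0 ≤ x) (hc : 0 < c)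
    (hq : 0 < q)
    (h : ∀ a₀ ∈ A₀.carrier, ∀ a₁ ∈ A₁.carrier, f = a₀ + a₁ →
      x ≤ c * (A₀.norm a₀ + t * A₁.norm a₁) ^ q) :
    x ≤ c * Kfun A₀ A₁ t f ^ q := by
  have hxc : 0 ≤ x / c := div_nonneg hx hc.le
  rw [← div_le_iff₀' hc, ← inv_inv q,
    Real.le_rpow_inv_iff_of_pos hxc (Kfun_nonneg hf hA₀ hA₁ ht) (inv_pos.2 hq)]
  refine le_Kfun hf fun a₀ ha₀ a₁ ha₁ hfa => ?_
  rw [← Real.le_rpow_inv_iff_of_pos hxc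
    (add_nonneg (hA₀ a₀ ha₀) (mul_nonneg ht (hA₁ a₁ ha₁))) (inv_pos.2 hq), inv_inv, div_le_iff₀' hc]
  exact h a₀ ha₀ a₁ ha₁ hfa

end Kfunctional

section Maligranda

variable {X₀ X₁ : BanachFunctionLattice Ω μ} {p t : ℝ} {f : Ω →ₘ[μ] ℝ}

theorem absRpow_le_smul_add_smul (hp : 1 ≤ p) {c₀ c₁ : Ω →ₘ[μ] ℝ} (hf : f = c₀ + c₁) {a b : ℝ}
    (ha : 0 < a) (hb : 0 < b) :
    absRpow p f ≤ ((a + b) ^ (p - 1) / a ^ (p - 1)) • absRpow p c₀ +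
      ((a + b) ^ (p - 1) / b ^ (p - 1)) • absRpow p c₁ := by
  rw [← AEEqFun.coeFn_le]
  filter_upwards [coeFn_absRpow p f, coeFn_absRpow p c₀, coeFn_absRpow p c₁,
    AEEqFun.coeFn_add (((a + b) ^ (p - 1) / a ^ (p - 1)) • absRpow p c₀)
      (((a + b) ^ (p - 1) / b ^ (p - 1)) • absRpow p c₁),
    AEEqFun.coeFn_smul ((a + b) ^ (p - 1) / a ^ (p - 1)) (absRpow p c₀),
    AEEqFun.coeFn_smul ((a + b) ^ (p - 1) / b ^ (p - 1)) (absRpow p c₁),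
    hf ▸ AEEqFun.coeFn_add c₀ c₁] with ω hf' h₀ h₁ hadd hs₀ hs₁ hsum
  rw [hf', hadd, Pi.add_apply, hs₀, hs₁, Pi.smul_apply, Pi.smul_apply, h₀, h₁, smul_eq_mul,
    smul_eq_mul, hsum, Pi.add_apply]
  calc |c₀ ω + c₁ ω| ^ p ≤ (|c₀ ω| + |c₁ ω|) ^ p := by gcongr; exact abs_add_le _ _
    _ ≤ (a + b) ^ (p - 1) * (|c₀ ω| ^ p / a ^ (p - 1) + |c₁ ω| ^ p / b ^ (p - 1)) :=
        Real.rpow_add_le_mul_rpow_div_add_rpow_div hp (abs_nonneg _) (abs_nonneg _) ha hb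
    _ = _ := by ring

theorem exists_absRpow_decomp (hp : 1 ≤ p) {c₀ c₁ : Ω →ₘ[μ] ℝ}
    (hc₀ : c₀ ∈ (pConv X₀ p).carrier) (hc₁ : c₁ ∈ (pConv X₁ p).carrier) (hf : f = c₀ + c₁)
    {a b : ℝ} (ha : 0 < a) (hb : 0 < b) :
    ∃ b₀ ∈ X₀.carrier, ∃ b₁ ∈ X₁.carrier, absRpow p f = b₀ + b₁ ∧
      X₀.norm b₀ ≤ (a + b) ^ (p - 1) / a ^ (p - 1) * X₀.norm (absRpow p c₀) ∧
      X₁.norm b₁ ≤ (a + b) ^ (p - 1) / b ^ (p - 1) * X₁.norm (absRpow p c₁) := by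
  have hC₀ : 0 ≤ (a + b) ^ (p - 1) / a ^ (p - 1) := by positivity
  have hC₁ : 0 ≤ (a + b) ^ (p - 1) / b ^ (p - 1) := by positivity
  obtain ⟨b₀, hb₀, b₁, hb₁, hsum, -, -, hn₀, hn₁⟩ :=
    exists_decomp_of_le_abs_add_abs X₀ X₁ (X₀.smul_mem _ hc₀) (X₁.smul_mem _ hc₁)
      (absRpow_nonneg p f)
      ((absRpow_le_smul_add_smul hp hf ha hb).trans (add_le_add (le_abs_self _) (le_abs_self _)))
  refine ⟨b₀, hb₀, b₁, hb₁, hsum, ?_, ?_⟩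
  · rwa [X₀.norm_smul _ _ hc₀, abs_of_nonneg hC₀] at hn₀
  · rwa [X₁.norm_smul _ _ hc₁, abs_of_nonneg hC₁] at hn₁

theorem absRpow_mem_sumSet (hp : 1 ≤ p) (hf : f ∈ sumSet (pConv X₀ p) (pConv X₁ p)) :
    absRpow p f ∈ sumSet X₀.toFunctionSpace X₁.toFunctionSpace := by
  obtain ⟨c₀, hc₀, c₁, hc₁, hfc⟩ := hf
  obtain ⟨b₀, hb₀, b₁, hb₁, hsum, -⟩ := exists_absRpow_decomp hp hc₀ hc₁ hfc one_pos one_pos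
  exact ⟨b₀, hb₀, b₁, hb₁, hsum⟩

theorem Kfun_absRpow_rpow_le (hp : 1 ≤ p) (ht : 0 ≤ t) {c₀ c₁ : Ω →ₘ[μ] ℝ}
    (hc₀ : c₀ ∈ (pConv X₀ p).carrier) (hc₁ : c₁ ∈ (pConv X₁ p).carrier) (hf : f = c₀ + c₁) :
    Kfun X₀.toFunctionSpace X₁.toFunctionSpace t (absRpow p f) ^ (1 / p) ≤
      (pConv X₀ p).norm c₀ + t ^ (1 / p) * (pConv X₁ p).norm c₁ := by
  have hN₀ := X₀.norm_nonneg _ hc₀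
  have hN₁ := X₁.norm_nonneg _ hc₁
  have hsplit : (pConv X₀ p).norm c₀ + t ^ (1 / p) * (pConv X₁ p).norm c₁ =
      X₀.norm (absRpow p c₀) ^ (1 / p) + (t * X₁.norm (absRpow p c₁)) ^ (1 / p) := by
    rw [Real.mul_rpow ht hN₁]; rfl
  rw [hsplit, one_div, Real.rpow_inv_le_iff_of_pos
    (Kfun_nonneg (absRpow_mem_sumSet hp ⟨c₀, hc₀, c₁, hc₁, hf⟩) X₀.norm_nonneg X₁.norm_nonneg ht)
    (by positivity) (by linarith), ← one_div]
  refine Real.le_rpow_add_rpow_of_forall_le hp hN₀ (mul_nonneg ht hN₁) fun a b ha hb => ?_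
  obtain ⟨b₀, hb₀, b₁, hb₁, hsum, hn₀, hn₁⟩ := exists_absRpow_decomp hp hc₀ hc₁ hf ha hb
  calc Kfun X₀.toFunctionSpace X₁.toFunctionSpace t (absRpow p f)
      ≤ X₀.norm b₀ + t * X₁.norm b₁ := Kfun_le X₀.norm_nonneg X₁.norm_nonneg ht hb₀ hb₁ hsum
    _ ≤ (a + b) ^ (p - 1) / a ^ (p - 1) * X₀.norm (absRpow p c₀) +
        t * ((a + b) ^ (p - 1) / b ^ (p - 1) * X₁.norm (absRpow p c₁)) := by gcongr
    _ = _ := by ring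

theorem exists_pConv_decomp (hp : 1 ≤ p) {h₀ h₁ : Ω →ₘ[μ] ℝ} (hh₀ : h₀ ∈ X₀.carrier)
    (hh₁ : h₁ ∈ X₁.carrier) (hf : absRpow p f = h₀ + h₁) :
    ∃ c₀ ∈ (pConv X₀ p).carrier, ∃ c₁ ∈ (pConv X₁ p).carrier, f = c₀ + c₁ ∧
      X₀.norm (absRpow p c₀) ≤ X₀.norm h₀ ∧ X₁.norm (absRpow p c₁) ≤ X₁.norm h₁ := by
  obtain ⟨m, hm, b₁, hb₁, hsum, hm0, hb₁0, hnm, hnb₁⟩ :=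
    exists_decomp_of_le_abs_add_abs X₀ X₁ hh₀ hh₁ (absRpow_nonneg p f)
      (hf ▸ add_le_add (le_abs_self _) (le_abs_self _))
  obtain ⟨c, hc, hfc⟩ :=
    exists_absRpow_eq_and_absRpow_sub_le hp hm0 (hsum ▸ le_add_of_nonneg_right hb₁0)
  rw [hsum, add_sub_cancel_left] at hfc
  have hfc' : absRpow p (f - c) ≤ |b₁| := hfc.trans (le_abs_self _)
  refine ⟨c, show absRpow p c ∈ X₀.carrier from hc ▸ hm, f - c,
    X₁.mem_of_nonneg_of_le_abs hb₁ (absRpow_nonneg _ _) hfc', (add_sub_cancel c f).symm,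
    hc ▸ hnm, (X₁.norm_le_of_nonneg_of_le_abs hb₁ (absRpow_nonneg _ _) hfc').trans hnb₁⟩

theorem Kfun_pConv_le (hp : 1 ≤ p) (ht : 0 ≤ t) {b₀ b₁ : Ω →ₘ[μ] ℝ} (hb₀ : b₀ ∈ X₀.carrier)
    (hb₁ : b₁ ∈ X₁.carrier) (hf : absRpow p f = b₀ + b₁) :
    Kfun (pConv X₀ p) (pConv X₁ p) (t ^ (1 / p)) f ≤
      2 ^ (1 - 1 / p) * (X₀.norm b₀ + t * X₁.norm b₁) ^ (1 / p) := by
  obtain ⟨c₀, hc₀, c₁, hc₁, hfc, hn₀, hn₁⟩ := exists_pConv_decomp hp hb₀ hb₁ hf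
  have hq : 0 < 1 / p := by positivity
  calc Kfun (pConv X₀ p) (pConv X₁ p) (t ^ (1 / p)) f
      ≤ (pConv X₀ p).norm c₀ + t ^ (1 / p) * (pConv X₁ p).norm c₁ :=
        Kfun_le (pConv_norm_nonneg X₀ p) (pConv_norm_nonneg X₁ p) (by positivity) hc₀ hc₁ hfc
    _ ≤ X₀.norm b₀ ^ (1 / p) + (t * X₁.norm b₁) ^ (1 / p) := by
        rw [Real.mul_rpow ht (X₁.norm_nonneg _ hb₁)]
        exact add_le_add (Real.rpow_le_rpow (X₀.norm_nonneg _ hc₀) hn₀ hq.le)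
          (mul_le_mul_of_nonneg_left (Real.rpow_le_rpow (X₁.norm_nonneg _ hc₁) hn₁ hq.le)
            (by positivity))
    _ ≤ 2 ^ (1 - 1 / p) * (X₀.norm b₀ + t * X₁.norm b₁) ^ (1 / p) :=
        Real.rpow_one_div_add_rpow_one_div_le hp (X₀.norm_nonneg _ hb₀)
          (mul_nonneg ht (X₁.norm_nonneg _ hb₁))

end Maligranda

/-- **Maligranda's inequality.** For `1 < p < ∞`, `f ∈ X₀^(p) + X₁^(p)` and
`t > 0`,
`K(t, |f|^p; X₀, X₁)^(1/p) ≤ K(t^(1/p), f; X₀^(p), X₁^(p)) ≤ 2^(1-1/p) K(t, |f|^p; X₀, X₁)^(1/p)`. -/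
theorem Kfun_pConv_equiv
    (X₀ X₁ : BanachFunctionLattice Ω μ) (p : ℝ) (hp : 1 < p)
    (f : Ω →ₘ[μ] ℝ) (hf : f ∈ sumSet (pConv X₀ p) (pConv X₁ p))
    (t : ℝ) (ht : 0 < t) :
    (Kfun X₀.toFunctionSpace X₁.toFunctionSpace t (absRpow p f)) ^ (1 / p)
        ≤ Kfun (pConv X₀ p) (pConv X₁ p) (t ^ (1 / p)) f ∧
      Kfun (pConv X₀ p) (pConv X₁ p) (t ^ (1 / p)) f
        ≤ 2 ^ (1 - 1 / p) *
          (Kfun X₀.toFunctionSpace X₁.toFunctionSpace t (absRpow p f)) ^ (1 / p) := by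
  have hP0 := Kfun_nonneg hf (pConv_norm_nonneg X₀ p) (pConv_norm_nonneg X₁ p)
    (t := t ^ (1 / p)) (by positivity)
  refine ⟨le_Kfun hf fun c₀ hc₀ c₁ hc₁ hfc => Kfun_absRpow_rpow_le hp.le ht.le hc₀ hc₁ hfc, ?_⟩
  exact le_mul_Kfun_rpow (absRpow_mem_sumSet hp.le hf) X₀.norm_nonneg X₁.norm_nonneg ht.le hP0
    (by positivity) (by positivity) fun b₀ hb₀ b₁ hb₁ hfb => Kfun_pConv_le hp.le ht.le hb₀ hb₁ hfb
end

section
/- Let X₀ and X₁ be Banach lattices of measurable functions on the same underlying measure space. Then the Banach lattice X₀+X₁ is a complete lattice if and only if both X₀ and X₁ are complete lattices. -/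
open MeasureTheory

variable {Ω : Type*} [MeasurableSpace Ω] {μ : MeasureTheory.Measure Ω}

/-!
Completeness can be tested on order intervals: for an order-convex subgroup `S`,
`HasLUBP S` holds iff every interval `[0, c]` with `0 ≤ c ∈ S` is a complete lattice: a family
bounded above by `b` and containing `a₀` is moved into `[0, b - a₀]` by `a ↦ (a - a₀)⁺`.
In `X₀ + X₁` every `0 ≤ c` splits as `c₀ + c₁` with `0 ≤ cⱼ ∈ Xⱼ`, and `x ↦ (x ⊓ c₀, (x - c₀)⁺)`
is a monotone section of addition `[0, c₀] × [0, c₁] → [0, c]`; so `[0, c]` is a monotone retract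
of the complete lattice `[0, c₀] × [0, c₁]`, hence complete itself.
-/

open LatticeOrderedAddCommGroup Set

namespace MeasureTheory.AEEqFun

variable {γ : Type*} [TopologicalSpace γ] [AddCommMonoid γ] [ContinuousAdd γ] [Preorder γ]
  [IsOrderedAddMonoid γ]

instance instIsOrderedAddMonoid : IsOrderedAddMonoid (Ω →ₘ[μ] γ) where
  add_le_add_left f g hfg h := by
    rw [← coeFn_le] at hfg ⊢
    filter_upwards [coeFn_add f h, coeFn_add g h, hfg] with ω hfh hgh hfgω
    rw [hfh, hgh, Pi.add_apply, Pi.add_apply]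
    exact add_le_add hfgω le_rfl

end MeasureTheory.AEEqFun

theorem IsLUB.of_image_of_leftInverse {α β : Type*} [Preorder α] [Preorder β] {f : α → β}
    {g : β → α} (hf : Monotone f) (hg : Monotone g) (hfg : Function.LeftInverse f g)
    {s : Set β} {a : α} (h : IsLUB (g '' s) a) : IsLUB s (f a) :=
  ⟨fun b hb => hfg b ▸ hf (h.1 (mem_image_of_mem g hb)),
    fun b hb => hfg b ▸ hf (h.2 (hg.mem_upperBounds_image hb))⟩

section LatticeOrderedGroup

variable {G : Type*} [Lattice G] [AddCommGroup G] [AddLeftMono G]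

theorem LatticeOrderedAddCommGroup.IsSolid.Icc_subset {s : Set G} (hs : IsSolid s) {x : G}
    (hx : x ∈ s) : Icc 0 |x| ⊆ s :=
  fun _ hy => hs hx ((abs_of_nonneg hy.1).trans_le hy.2)

theorem LatticeOrderedAddCommGroup.IsSolid.ordConnected {S : AddSubgroup G}
    (hS : IsSolid (S : Set G)) : (S : Set G).OrdConnected := by
  refine ⟨fun x hx y hy z hz => ?_⟩
  have hzx : z - x ∈ S := hS.Icc_subset (S.sub_mem hy hx)
    ⟨sub_nonneg.2 hz.1, (sub_le_sub_right hz.2 x).trans (le_abs_self _)⟩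
  simpa using S.add_mem hzx hx

def splitIcc {a b : G} (ha : 0 ≤ a) (hb : 0 ≤ b) (x : Icc (0 : G) (a + b)) :
    Icc (0 : G) a × Icc (0 : G) b :=
  (⟨(x : G) ⊓ a, le_inf x.2.1 ha, inf_le_right⟩,
    ⟨((x : G) - a)⁺, posPart_nonneg _, sup_le (sub_le_iff_le_add'.2 x.2.2) hb⟩)

theorem monotone_splitIcc {a b : G} (ha : 0 ≤ a) (hb : 0 ≤ b) : Monotone (splitIcc ha hb) :=
  fun _ _ (hxy : _ ≤ (_ : G)) => ⟨inf_le_inf_right _ hxy, posPart_mono (sub_le_sub_right hxy _)⟩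

theorem splitIcc_fst_add_snd {a b : G} (ha : 0 ≤ a) (hb : 0 ≤ b) (x : Icc (0 : G) (a + b)) :
    ((splitIcc ha hb x).1 : G) + (splitIcc ha hb x).2 = x := by
  simp only [splitIcc, inf_eq_sub_posPart_sub, sub_add_cancel]

theorem exists_isLUB_Icc_add {a b : G} (ha : 0 ≤ a) (hb : 0 ≤ b)
    (h₀ : ∀ s : Set (Icc (0 : G) a), ∃ x, IsLUB s x)
    (h₁ : ∀ s : Set (Icc (0 : G) b), ∃ x, IsLUB s x) (s : Set (Icc (0 : G) (a + b))) :
    ∃ x, IsLUB s x := by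
  let add : Icc (0 : G) a × Icc (0 : G) b → Icc (0 : G) (a + b) :=
    fun p => ⟨p.1 + p.2, add_nonneg p.1.2.1 p.2.2.1, add_le_add p.1.2.2 p.2.2.2⟩
  have add_mono : Monotone add := fun p q hpq => add_le_add hpq.1 hpq.2
  obtain ⟨x₀, hx₀⟩ := h₀ (Prod.fst '' (splitIcc ha hb '' s))
  obtain ⟨x₁, hx₁⟩ := h₁ (Prod.snd '' (splitIcc ha hb '' s))
  exact ⟨add (x₀, x₁), (isLUB_prod.2 ⟨hx₀, hx₁⟩).of_image_of_leftInverse add_mono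
    (monotone_splitIcc ha hb) fun x => Subtype.ext (splitIcc_fst_add_snd ha hb x)⟩

variable {S₀ S₁ : AddSubgroup G}

theorem exists_nonneg_add_eq_of_le_of_mem_sup (h₀ : IsSolid (S₀ : Set G))
    (h₁ : IsSolid (S₁ : Set G)) {x c : G} (hx : 0 ≤ x) (hxc : x ≤ c) (hc : c ∈ S₀ ⊔ S₁) :
    ∃ x₀ ∈ S₀, ∃ x₁ ∈ S₁, 0 ≤ x₀ ∧ 0 ≤ x₁ ∧ x₀ + x₁ = x := by
  obtain ⟨d₀, hd₀, d₁, hd₁, rfl⟩ := AddSubgroup.mem_sup.1 hc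
  let p := splitIcc (abs_nonneg d₀) (abs_nonneg d₁)
    ⟨x, hx, hxc.trans (add_le_add (le_abs_self d₀) (le_abs_self d₁))⟩
  exact ⟨p.1, h₀.Icc_subset hd₀ p.1.2, p.2, h₁.Icc_subset hd₁ p.2.2, p.1.2.1, p.2.2.1,
    splitIcc_fst_add_snd _ _ _⟩

theorem ordConnected_sup_of_isSolid (h₀ : IsSolid (S₀ : Set G)) (h₁ : IsSolid (S₁ : Set G)) :
    ((S₀ ⊔ S₁ : AddSubgroup G) : Set G).OrdConnected := by
  refine ⟨fun x hx y hy z hz => ?_⟩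
  obtain ⟨z₀, hz₀, z₁, hz₁, -, -, hz⟩ := exists_nonneg_add_eq_of_le_of_mem_sup h₀ h₁
    (sub_nonneg.2 hz.1) (sub_le_sub_right hz.2 x) ((S₀ ⊔ S₁).sub_mem hy hx)
  have hzx : z - x ∈ S₀ ⊔ S₁ :=
    hz ▸ add_mem (AddSubgroup.mem_sup_left hz₀) (AddSubgroup.mem_sup_right hz₁)
  simpa using (S₀ ⊔ S₁).add_mem hzx hx

end LatticeOrderedGroup

section HasLUBP

variable {S : AddSubgroup (Ω →ₘ[μ] ℝ)}

theorem HasLUBP.exists_isLUB_Icc (h : HasLUBP (S : Set (Ω →ₘ[μ] ℝ)))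
    (hS : (S : Set (Ω →ₘ[μ] ℝ)).OrdConnected) {c : Ω →ₘ[μ] ℝ} (hc : c ∈ S) (hc0 : 0 ≤ c)
    (s : Set (Icc 0 c)) : ∃ x, IsLUB s x := by
  have hIcc : Icc 0 c ⊆ S := hS.out S.zero_mem hc
  rcases s.eq_empty_or_nonempty with rfl | ⟨x₀, hx₀⟩
  · exact ⟨⟨0, le_rfl, hc0⟩, isLUB_empty_iff.2 fun x => x.2.1⟩
  obtain ⟨y, -, hys, hy⟩ := h (Subtype.val '' s) (image_subset_iff.2 fun x _ => hIcc x.2)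
    ⟨x₀, mem_image_of_mem _ hx₀⟩ ⟨c, hc, forall_mem_image.2 fun x _ => x.2.2⟩
  have hyIcc : y ∈ Icc 0 c :=
    ⟨x₀.2.1.trans (hys _ (mem_image_of_mem _ hx₀)), hy c hc (forall_mem_image.2 fun x _ => x.2.2)⟩
  exact ⟨⟨y, hyIcc⟩, fun x hx => hys _ (mem_image_of_mem _ hx),
    fun z hz => hy z (hIcc z.2) (forall_mem_image.2 fun x hx => hz hx)⟩

theorem hasLUBP_of_exists_isLUB_Icc (hS : (S : Set (Ω →ₘ[μ] ℝ)).OrdConnected)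
    (h : ∀ c ∈ S, 0 ≤ c → ∀ s : Set (Icc 0 c), ∃ x, IsLUB s x) :
    HasLUBP (S : Set (Ω →ₘ[μ] ℝ)) := by
  rintro A hAS ⟨a₀, ha₀⟩ ⟨b, hbS, hbA⟩
  have hc : b - a₀ ∈ S := S.sub_mem hbS (hAS ha₀)
  have hc0 : 0 ≤ b - a₀ := sub_nonneg.2 (hbA a₀ ha₀)
  let shift (a : Ω →ₘ[μ] ℝ) (ha : a ∈ A) : Icc 0 (b - a₀) :=
    ⟨(a - a₀)⁺, posPart_nonneg _, sup_le (sub_le_sub_right (hbA a ha) a₀) hc0⟩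
  obtain ⟨y, hy⟩ := h _ hc hc0 {x | ∃ a ha, x = shift a ha}
  refine ⟨a₀ + (y : Ω →ₘ[μ] ℝ), S.add_mem (hAS ha₀) (hS.out S.zero_mem hc y.2),
    fun a ha => ?_, fun z _ hzA => ?_⟩
  · calc a = a₀ + (a - a₀) := (add_sub_cancel a₀ a).symm
      _ ≤ a₀ + (a - a₀)⁺ := add_le_add_right (le_posPart _) a₀
      _ ≤ a₀ + (y : Ω →ₘ[μ] ℝ) :=
        add_le_add_right (Subtype.coe_le_coe.2 (hy.1 ⟨a, ha, rfl⟩)) a₀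
  · have hz0 : 0 ≤ z - a₀ := sub_nonneg.2 (hzA a₀ ha₀)
    let z' : Icc 0 (b - a₀) := ⟨(z - a₀) ⊓ (b - a₀), le_inf hz0 hc0, inf_le_right⟩
    have hyz : y ≤ z' := hy.2 fun _ ⟨a, ha, hx⟩ => hx ▸
      le_inf (sup_le (sub_le_sub_right (hzA a ha) a₀) hz0) (shift a ha).2.2
    calc a₀ + (y : Ω →ₘ[μ] ℝ) ≤ a₀ + (z - a₀) :=
          add_le_add_right ((Subtype.coe_le_coe.2 hyz).trans inf_le_left) a₀
      _ = z := add_sub_cancel a₀ z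

theorem hasLUBP_iff_forall_exists_isLUB_Icc (hS : (S : Set (Ω →ₘ[μ] ℝ)).OrdConnected) :
    HasLUBP (S : Set (Ω →ₘ[μ] ℝ)) ↔ ∀ c ∈ S, 0 ≤ c → ∀ s : Set (Icc 0 c), ∃ x, IsLUB s x :=
  ⟨fun h _ hc hc0 => h.exists_isLUB_Icc hS hc hc0, hasLUBP_of_exists_isLUB_Icc hS⟩

end HasLUBP

namespace BanachFunctionLattice

def toAddSubgroup (X : BanachFunctionLattice Ω μ) : AddSubgroup (Ω →ₘ[μ] ℝ) where
  carrier := X.carrier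
  zero_mem' := X.zero_mem
  add_mem' := X.add_mem
  neg_mem' {f} hf := X.ideal_mem f hf (-f) (abs_neg f).le

theorem coe_toAddSubgroup (X : BanachFunctionLattice Ω μ) :
    (X.toAddSubgroup : Set (Ω →ₘ[μ] ℝ)) = X.carrier := rfl

theorem isSolid (X : BanachFunctionLattice Ω μ) :
    IsSolid (X.toAddSubgroup : Set (Ω →ₘ[μ] ℝ)) :=
  fun f hf g hg => X.ideal_mem f hf g hg

theorem sumSet_eq_coe_sup (X₀ X₁ : BanachFunctionLattice Ω μ) :
    sumSet X₀.toFunctionSpace X₁.toFunctionSpace =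
      (X₀.toAddSubgroup ⊔ X₁.toAddSubgroup : AddSubgroup (Ω →ₘ[μ] ℝ)) := by
  ext f
  simp only [sumSet, SetLike.mem_coe, AddSubgroup.mem_sup, eq_comm]
  rfl

end BanachFunctionLattice

/-- `X₀ + X₁` is a complete lattice if and only if both `X₀` and `X₁`
are complete lattices. -/
theorem hasLUBP_sumSet_iff
    (X₀ X₁ : BanachFunctionLattice Ω μ) :
    HasLUBP (sumSet X₀.toFunctionSpace X₁.toFunctionSpace) ↔
      (HasLUBP X₀.carrier ∧ HasLUBP X₁.carrier) := by
  have h₀ := X₀.isSolid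
  have h₁ := X₁.isSolid
  rw [X₀.sumSet_eq_coe_sup, ← X₀.coe_toAddSubgroup, ← X₁.coe_toAddSubgroup,
    hasLUBP_iff_forall_exists_isLUB_Icc (ordConnected_sup_of_isSolid h₀ h₁),
    hasLUBP_iff_forall_exists_isLUB_Icc h₀.ordConnected,
    hasLUBP_iff_forall_exists_isLUB_Icc h₁.ordConnected]
  refine ⟨fun h => ⟨fun c hc => h c (AddSubgroup.mem_sup_left hc),
    fun c hc => h c (AddSubgroup.mem_sup_right hc)⟩, fun ⟨H₀, H₁⟩ c hc hc0 => ?_⟩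
  obtain ⟨c₀, hc₀, c₁, hc₁, h0, h1, rfl⟩ :=
    exists_nonneg_add_eq_of_le_of_mem_sup h₀ h₁ hc0 le_rfl hc
  exact exists_isLUB_Icc_add h0 h1 (H₀ c₀ hc₀ h0) (H₁ c₁ hc₁ h1)
end

section
/- Let X be a Banach lattice of real-valued measurable functions on a measure space (Ω,Σ,μ). If (Ω,Σ,μ) is σ-finite, then X is a complete lattice. -/
open MeasureTheory

variable {Ω : Type*} [MeasurableSpace Ω] {μ : MeasureTheory.Measure Ω}

/-- Sandwich lemma: an element between two members of an ideal is in the ideal. -/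
lemma BanachFunctionLattice.mem_of_between (X : BanachFunctionLattice Ω μ)
    {a b h : Ω →ₘ[μ] ℝ} (ha : a ∈ X.carrier) (hb : b ∈ X.carrier)
    (h1 : a ≤ h) (h2 : h ≤ b) : h ∈ X.carrier := by
  have haA : |a| ∈ X.carrier := by
    refine X.ideal_mem a ha |a| ?_
    rw [← AEEqFun.coeFn_le]
    filter_upwards [AEEqFun.coeFn_abs a, AEEqFun.coeFn_abs |a|] with ω e1 e2
    rw [e2, e1, abs_abs]
  have hbA : |b| ∈ X.carrier := by
    refine X.ideal_mem b hb |b| ?_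
    rw [← AEEqFun.coeFn_le]
    filter_upwards [AEEqFun.coeFn_abs b, AEEqFun.coeFn_abs |b|] with ω e1 e2
    rw [e2, e1, abs_abs]
  refine X.ideal_mem (|a| + |b|) (X.add_mem haA hbA) h ?_
  rw [← AEEqFun.coeFn_le]
  filter_upwards [AEEqFun.coeFn_le.2 h1, AEEqFun.coeFn_le.2 h2, AEEqFun.coeFn_abs h,
    AEEqFun.coeFn_abs (|a| + |b|), AEEqFun.coeFn_add (|a| : Ω →ₘ[μ] ℝ) |b|,
    AEEqFun.coeFn_abs a, AEEqFun.coeFn_abs b] with ω e1 e2 e3 e4 e5 e6 e7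
  rw [e3, e4, e5]
  simp only [Pi.add_apply]
  rw [e6, e7]
  have : |(h : Ω → ℝ) ω| ≤ max |(a : Ω → ℝ) ω| |(b : Ω → ℝ) ω| := abs_le_max_abs_abs e1 e2
  have h5 : max |a ω| |b ω| ≤ |a ω| + |b ω| :=
    max_le (le_add_of_nonneg_right (abs_nonneg _)) (le_add_of_nonneg_left (abs_nonneg _))
  calc |h ω| ≤ |a ω| + |b ω| := this.trans h5
    _ ≤ |(|a ω| + |b ω|)| := le_abs_self _

open Filter Real Topology in
/-- If the underlying measure space is `σ`-finite then any Banach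
lattice of measurable functions on it is a complete lattice. -/
theorem hasLUBP_of_sigmaFinite
    [MeasureTheory.SigmaFinite μ] (X : BanachFunctionLattice Ω μ) :
    HasLUBP X.carrier := by
  classical
  intro A hA hA_ne hA_bdd
  obtain ⟨a₀, ha₀⟩ := hA_ne
  obtain ⟨b, hbX, hb⟩ := hA_bdd
  -- a finite measure equivalent to μ
  obtain ⟨ν, hνfin, hμν, hνμ⟩ := exists_isFiniteMeasure_absolutelyContinuous μ
  haveI : IsFiniteMeasure ν := hνfin
  have haeeq : ae μ = ae ν := le_antisymm hμν.ae_le hνμ.ae_le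
  -- the strictly monotone functional J
  set J : (Ω →ₘ[μ] ℝ) → ℝ := fun f => ∫ ω, arctan (f ω) ∂ν with hJdef
  have habs : ∀ x : ℝ, |arctan x| ≤ π / 2 := fun x =>
    le_of_lt (abs_lt.2 ⟨neg_pi_div_two_lt_arctan x, arctan_lt_pi_div_two x⟩)
  have hmeasJ : ∀ f : Ω →ₘ[μ] ℝ, AEStronglyMeasurable (fun ω => arctan (f ω)) ν :=
    fun f => continuous_arctan.comp_aestronglyMeasurable
      (f.aestronglyMeasurable.mono_ac hνμ)
  have hInt : ∀ f : Ω →ₘ[μ] ℝ, Integrable (fun ω => arctan (f ω)) ν := by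
    intro f
    refine (integrable_const (π / 2)).mono' (hmeasJ f) ?_
    filter_upwards with ω using habs _
  have hJmono : ∀ f g : Ω →ₘ[μ] ℝ, f ≤ g → J f ≤ J g := by
    intro f g hfg
    refine integral_mono_ae (hInt f) (hInt g) ?_
    have := AEEqFun.coeFn_le.2 hfg
    rw [haeeq] at this
    filter_upwards [this] with ω hω using arctan_strictMono.monotone hω
  have hJstrict : ∀ f g : Ω →ₘ[μ] ℝ, f ≤ g → J g ≤ J f → f = g := by
    intro f g hfg hJle
    have hle : (fun ω => arctan (f ω)) ≤ᵐ[ν] fun ω => arctan (g ω) := by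
      have := AEEqFun.coeFn_le.2 hfg
      rw [haeeq] at this
      filter_upwards [this] with ω hω using arctan_strictMono.monotone hω
    have hzero : ∫ ω, (arctan ((g : Ω → ℝ) ω) - arctan ((f : Ω → ℝ) ω)) ∂ν = 0 := by
      rw [integral_sub (hInt g) (hInt f)]
      have : J f ≤ J g := integral_mono_ae (hInt f) (hInt g) hle
      linarith [this, hJle]
    have hnn : 0 ≤ᵐ[ν] fun ω => arctan ((g : Ω → ℝ) ω) - arctan ((f : Ω → ℝ) ω) := by
      filter_upwards [hle] with ω hω
      simpa using sub_nonneg.2 hω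
    have := (integral_eq_zero_iff_of_nonneg_ae hnn ((hInt g).sub (hInt f))).1 hzero
    refine AEEqFun.ext ?_
    have : (fun ω => arctan (f ω)) =ᵐ[ν] fun ω => arctan (g ω) := by
      filter_upwards [this] with ω hω
      have : arctan (g ω) - arctan (f ω) = 0 := by simpa [Pi.sub_apply] using hω
      linarith
    have : (f : Ω → ℝ) =ᵐ[ν] g := by
      filter_upwards [this] with ω hω using arctan_injective hω
    rwa [← haeeq] at this
  -- the sup-closed hull of A
  set A' : Set (Ω →ₘ[μ] ℝ) :=
    {f | ∃ t : Finset (Ω →ₘ[μ] ℝ), ∃ ht : t.Nonempty, ↑t ⊆ A ∧ f = t.sup' ht id}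
    with hA'def
  have hAA' : A ⊆ A' := by
    intro a ha
    refine ⟨{a}, ⟨a, Finset.mem_singleton_self a⟩, by simpa using ha, ?_⟩
    simp
  have hA'sup : ∀ f ∈ A', ∀ g ∈ A', f ⊔ g ∈ A' := by
    rintro f ⟨t, ht, htA, rfl⟩ g ⟨s, hs, hsA, rfl⟩
    refine ⟨t ∪ s, ht.mono Finset.subset_union_left, ?_, ?_⟩
    · intro x hx
      rcases Finset.mem_union.1 hx with h | h
      exacts [htA h, hsA h]
    · rw [Finset.sup'_union ht hs id]
  have hA'le : ∀ f ∈ A', ∀ z : Ω →ₘ[μ] ℝ, (∀ a ∈ A, a ≤ z) → f ≤ z := by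
    rintro f ⟨t, ht, htA, rfl⟩ z hz
    exact Finset.sup'_le ht id fun i hi => hz i (htA hi)
  have hA'b : ∀ f ∈ A', f ≤ b := fun f hf => hA'le f hf b hb
  have hA'ge : ∀ f ∈ A', ∃ a ∈ A, a ≤ f := by
    rintro f ⟨t, ht, htA, rfl⟩
    obtain ⟨i, hi⟩ := ht
    exact ⟨i, htA hi, Finset.le_sup' id hi⟩
  have hA'X : ∀ f ∈ A', f ∈ X.carrier := by
    intro f hf
    obtain ⟨a, haA, haf⟩ := hA'ge f hf
    exact X.mem_of_between (hA haA) hbX haf (hA'b f hf)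
  -- the supremum of J over A'
  have hJA'_bdd : BddAbove (J '' A') :=
    ⟨J b, by rintro r ⟨f, hf, rfl⟩; exact hJmono f b (hA'b f hf)⟩
  have hJA'_ne : (J '' A').Nonempty := ⟨J a₀, a₀, hAA' ha₀, rfl⟩
  set s : ℝ := sSup (J '' A') with hsdef
  have hJle_s : ∀ f ∈ A', J f ≤ s := fun f hf => le_csSup hJA'_bdd ⟨f, hf, rfl⟩
  -- a maximizing sequence
  have hc : ∀ n : ℕ, ∃ f ∈ A', s - 1 / (n + 1) < J f := by
    intro n
    have hlt : s - 1 / (n + 1) < s := by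
      have : (0 : ℝ) < 1 / (n + 1) := by positivity
      linarith
    obtain ⟨r, ⟨f, hf, rfl⟩, hr⟩ := exists_lt_of_lt_csSup hJA'_ne hlt
    exact ⟨f, hf, hr⟩
  choose c hcA' hcJ using hc
  -- the increasing sequence of partial sups
  set g : ℕ → (Ω →ₘ[μ] ℝ) := fun n => Nat.rec (c 0) (fun k gk => gk ⊔ c (k + 1)) n with hgdef
  have hgsucc : ∀ n, g (n + 1) = g n ⊔ c (n + 1) := fun n => rfl
  have hgA' : ∀ n, g n ∈ A' := by
    intro n
    induction n with
    | zero => exact hcA' 0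
    | succ k ih => rw [hgsucc]; exact hA'sup _ ih _ (hcA' (k + 1))
  have hgmono : Monotone g := monotone_nat_of_le_succ fun n => by rw [hgsucc]; exact le_sup_left
  have hcg : ∀ n, c n ≤ g n := by
    intro n
    cases n with
    | zero => exact le_rfl
    | succ k => rw [hgsucc]; exact le_sup_right
  have hJg_lb : ∀ n, s - 1 / (n + 1) < J (g n) :=
    fun n => (hcJ n).trans_le (hJmono _ _ (hcg n))
  have hJg_ub : ∀ n, J (g n) ≤ s := fun n => hJle_s _ (hgA' n)
  have hJg_tendsto : Tendsto (fun n => J (g n)) atTop (𝓝 s) := by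
    have h1 : Tendsto (fun n : ℕ => s - 1 / (n + 1 : ℝ)) atTop (𝓝 (s - 0)) :=
      tendsto_const_nhds.sub tendsto_one_div_add_atTop_nhds_zero_nat
    rw [sub_zero] at h1
    exact tendsto_of_tendsto_of_tendsto_of_le_of_le h1 tendsto_const_nhds
      (fun n => (hJg_lb n).le) hJg_ub
  -- a.e. monotone and bounded
  have hmono_ae : ∀ᵐ ω ∂μ, ∀ n, (g n : Ω → ℝ) ω ≤ (g (n + 1) : Ω → ℝ) ω :=
    ae_all_iff.2 fun n => AEEqFun.coeFn_le.2 (hgmono (Nat.le_succ n))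
  have hb_ae : ∀ᵐ ω ∂μ, ∀ n, (g n : Ω → ℝ) ω ≤ (b : Ω → ℝ) ω :=
    ae_all_iff.2 fun n => AEEqFun.coeFn_le.2 (hA'b _ (hgA' n))
  -- the a.e. limit
  set ylim : Ω → ℝ := fun ω => limUnder atTop (fun n => (g n : Ω → ℝ) ω) with hylimdef
  have htendsto_ae : ∀ᵐ ω ∂μ, Tendsto (fun n => (g n : Ω → ℝ) ω) atTop (𝓝 (ylim ω)) := by
    filter_upwards [hmono_ae, hb_ae] with ω h1 h2
    have hm : Monotone fun n => (g n : Ω → ℝ) ω := monotone_nat_of_le_succ h1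
    have hbdd : BddAbove (Set.range fun n => (g n : Ω → ℝ) ω) := by
      refine ⟨(b : Ω → ℝ) ω, ?_⟩
      rintro x ⟨n, rfl⟩
      exact h2 n
    have ht := tendsto_atTop_ciSup hm hbdd
    have : ylim ω = ⨆ n, (g n : Ω → ℝ) ω := ht.limUnder_eq
    rw [this]
    exact ht
  have hylim_meas : AEStronglyMeasurable ylim μ := by
    refine (aemeasurable_of_tendsto_metrizable_ae' (fun n =>
      (g n).aestronglyMeasurable.aemeasurable) htendsto_ae).aestronglyMeasurable
  set y : Ω →ₘ[μ] ℝ := AEEqFun.mk ylim hylim_meas with hydef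
  have hy_coe : (y : Ω → ℝ) =ᵐ[μ] ylim := AEEqFun.coeFn_mk ylim hylim_meas
  -- basic order relations for y
  have hgy : ∀ n, g n ≤ y := by
    intro n
    rw [← AEEqFun.coeFn_le]
    filter_upwards [htendsto_ae, hmono_ae, hy_coe] with ω ht hm hyc
    rw [hyc]
    exact (monotone_nat_of_le_succ hm).ge_of_tendsto ht n
  have hyb : y ≤ b := by
    rw [← AEEqFun.coeFn_le]
    filter_upwards [htendsto_ae, hb_ae, hy_coe] with ω ht h2 hyc
    rw [hyc]
    exact le_of_tendsto ht (Eventually.of_forall h2)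
  have hyX : y ∈ X.carrier := by
    obtain ⟨a, haA, hag⟩ := hA'ge _ (hgA' 0)
    exact X.mem_of_between (hA haA) hbX (hag.trans (hgy 0)) hyb
  -- J y = s, by dominated convergence
  have htendsto_ν : ∀ᵐ ω ∂ν, Tendsto (fun n => (g n : Ω → ℝ) ω) atTop (𝓝 (ylim ω)) := by
    rw [← haeeq]; exact htendsto_ae
  have hy_coe_ν : (y : Ω → ℝ) =ᵐ[ν] ylim := by rw [← haeeq]; exact hy_coe
  have hJg_to_Jy : Tendsto (fun n => J (g n)) atTop (𝓝 (J y)) := by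
    refine tendsto_integral_of_dominated_convergence (fun _ => π / 2)
      (fun n => hmeasJ (g n)) (integrable_const _) (fun n => ?_) ?_
    · filter_upwards with ω
      simpa using habs ((g n : Ω → ℝ) ω)
    · filter_upwards [htendsto_ν, hy_coe_ν] with ω ht hyc
      rw [hyc]
      exact (continuous_arctan.tendsto _).comp ht
  have hJy : J y = s := tendsto_nhds_unique hJg_to_Jy hJg_tendsto
  refine ⟨y, hyX, ?_, ?_⟩
  · -- y is an upper bound
    intro a ha
    have hsupA' : ∀ n, a ⊔ g n ∈ A' := fun n => hA'sup a (hAA' ha) _ (hgA' n)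
    have hsup_le_s : ∀ n, J (a ⊔ g n) ≤ s := fun n => hJle_s _ (hsupA' n)
    -- J (a ⊔ g n) → J (a ⊔ y)
    have hcoe_sup : ∀ᵐ ω ∂ν, ∀ n, ((a ⊔ g n : Ω →ₘ[μ] ℝ) : Ω → ℝ) ω
        = max ((a : Ω → ℝ) ω) ((g n : Ω → ℝ) ω) := by
      rw [← haeeq]
      exact ae_all_iff.2 fun n => AEEqFun.coeFn_sup a (g n)
    have hcoe_supy : ((a ⊔ y : Ω →ₘ[μ] ℝ) : Ω → ℝ) =ᵐ[ν]
        fun ω => max ((a : Ω → ℝ) ω) ((y : Ω → ℝ) ω) := by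
      rw [← haeeq]
      exact AEEqFun.coeFn_sup a y
    have htend2 : Tendsto (fun n => J (a ⊔ g n)) atTop (𝓝 (J (a ⊔ y))) := by
      refine tendsto_integral_of_dominated_convergence (fun _ => π / 2)
        (fun n => hmeasJ (a ⊔ g n)) (integrable_const _) (fun n => ?_) ?_
      · filter_upwards with ω
        simpa using habs _
      · filter_upwards [htendsto_ν, hy_coe_ν, hcoe_sup, hcoe_supy] with ω ht hyc hcs hcsy
        have : Tendsto (fun n => max ((a : Ω → ℝ) ω) ((g n : Ω → ℝ) ω)) atTop
            (𝓝 (max ((a : Ω → ℝ) ω) (ylim ω))) := tendsto_const_nhds.max ht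
        have h2 : Tendsto (fun n => arctan (((a ⊔ g n : Ω →ₘ[μ] ℝ) : Ω → ℝ) ω)) atTop
            (𝓝 (arctan (max ((a : Ω → ℝ) ω) (ylim ω)))) := by
          simp only [hcs]
          exact (continuous_arctan.tendsto _).comp this
        rw [hcsy, hyc]
        exact h2
    have h2 : J (a ⊔ y) ≤ s := le_of_tendsto htend2 (Eventually.of_forall hsup_le_s)
    have heq : y = a ⊔ y := hJstrict y (a ⊔ y) le_sup_right (by rw [hJy]; exact h2)
    calc a ≤ a ⊔ y := le_sup_left
      _ = y := heq.symm
  · -- y is the least upper bound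
    intro z hz hzub
    rw [← AEEqFun.coeFn_le]
    have hgz : ∀ n, g n ≤ z := fun n => hA'le _ (hgA' n) z hzub
    have hgz_ae : ∀ᵐ ω ∂μ, ∀ n, (g n : Ω → ℝ) ω ≤ (z : Ω → ℝ) ω :=
      ae_all_iff.2 fun n => AEEqFun.coeFn_le.2 (hgz n)
    filter_upwards [htendsto_ae, hgz_ae, hy_coe] with ω ht hle hyc
    rw [hyc]
    exact le_of_tendsto ht (Eventually.of_forall hle)
end

section
/- Let X be a Banach lattice of measurable functions on a measure space (Ω,Σ,μ). For f ∈ X let Ω_f = {ω ∈ Ω : f(ω) ≠ 0} denote its support, and let L^∞(Ω_f) denote the lattice of essentially bounded measurable functions on Ω that vanish a.e. on Ω∖Ω_f, with the pointwise a.e. order. Then X has the Least Upper Bound Property if and only if L^∞(Ω_f) has the Least Upper Bound Property for every f ∈ X. -/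
open MeasureTheory

variable {Ω : Type*} [MeasurableSpace Ω] {μ : MeasureTheory.Measure Ω}

/-- The lattice `L^∞(Ω_f)` of (classes of) essentially bounded measurable functions which
vanish a.e. outside the support `Ω_f = {ω : f ω ≠ 0}` of `f`. -/
def LinftySupport (f : Ω →ₘ[μ] ℝ) : Set (Ω →ₘ[μ] ℝ) :=
  {g | (∃ C : ℝ, ∀ᵐ ω ∂μ, |g ω| ≤ C) ∧ ∀ᵐ ω ∂μ, f ω = 0 → g ω = 0}


section AuxLUBP

/-- a.e. pointwise division, with the convention `x / 0 = 0`. -/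
noncomputable def aeDiv (f g : Ω →ₘ[μ] ℝ) : Ω →ₘ[μ] ℝ :=
  AEEqFun.mk (fun ω => g ω / f ω)
    ((g.aemeasurable.div f.aemeasurable).aestronglyMeasurable)

theorem aeDiv_coeFn (f g : Ω →ₘ[μ] ℝ) :
    ⇑(aeDiv f g) =ᵐ[μ] fun ω => g ω / f ω :=
  AEEqFun.coeFn_mk _ _

theorem ae_le_of_le {f g : Ω →ₘ[μ] ℝ} (h : f ≤ g) : ∀ᵐ ω ∂μ, f ω ≤ g ω :=
  AEEqFun.coeFn_le.mpr h

theorem le_of_ae_le {f g : Ω →ₘ[μ] ℝ} (h : ∀ᵐ ω ∂μ, f ω ≤ g ω) : f ≤ g :=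
  AEEqFun.coeFn_le.mp h

theorem mem_of_ae_abs_le (X : BanachFunctionLattice Ω μ) {h : Ω →ₘ[μ] ℝ}
    (hh : h ∈ X.carrier) (g : Ω →ₘ[μ] ℝ) (hle : ∀ᵐ ω ∂μ, |g ω| ≤ |h ω|) :
    g ∈ X.carrier := by
  refine X.ideal_mem h hh g (le_of_ae_le ?_)
  filter_upwards [AEEqFun.coeFn_abs g, AEEqFun.coeFn_abs h, hle] with ω h1 h2 h3
  rw [h1, h2]; exact h3

theorem abs_abs_le (b : Ω →ₘ[μ] ℝ) : |(|b|)| ≤ |b| := by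
  refine le_of_ae_le ?_
  filter_upwards [AEEqFun.coeFn_abs |b|, AEEqFun.coeFn_abs b] with ω h1 h2
  rw [h1, h2, abs_abs]

end AuxLUBP

/-- `X` has the Least Upper Bound Property if and only if `L^∞(Ω_f)`
has the Least Upper Bound Property for every `f ∈ X`. -/
theorem hasLUBP_iff_forall_linftySupport_hasLUBP
    (X : BanachFunctionLattice Ω μ) :
    HasLUBP X.carrier ↔ ∀ f ∈ X.carrier, HasLUBP (LinftySupport f) := by
  constructor
  · -- forward direction
    intro hX f hf A hA ⟨a₀, ha₀A⟩ ⟨b, hbS, hbub⟩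
    -- the embedding g ↦ g * |f|
    have hMmem : ∀ g ∈ LinftySupport f, g * |f| ∈ X.carrier := by
      rintro g ⟨⟨C, hC⟩, -⟩
      refine mem_of_ae_abs_le X (X.smul_mem |C| hf) _ ?_
      filter_upwards [AEEqFun.coeFn_mul g |f|, AEEqFun.coeFn_abs f,
        AEEqFun.coeFn_smul |C| f, hC] with ω h1 h2 h3 h4
      rw [h1, h3]
      simp only [Pi.mul_apply, Pi.smul_apply, smul_eq_mul, h2]
      rw [abs_mul, abs_mul, abs_abs, abs_abs]
      exact mul_le_mul_of_nonneg_right (h4.trans (le_abs_self C)) (abs_nonneg _)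
    have hMmono : ∀ g h : Ω →ₘ[μ] ℝ, g ≤ h → g * |f| ≤ h * |f| := by
      intro g h hgh
      refine le_of_ae_le ?_
      filter_upwards [AEEqFun.coeFn_mul g |f|, AEEqFun.coeFn_mul h |f|,
        AEEqFun.coeFn_abs f, ae_le_of_le hgh] with ω h1 h2 h3 h4
      rw [h1, h2]
      exact mul_le_mul_of_nonneg_right h4 (by rw [h3]; exact abs_nonneg _)
    obtain ⟨y, hyX, hyub, hylub⟩ :=
      hX ((fun g => g * |f|) '' A)
        (by rintro x ⟨a, haA, rfl⟩; exact hMmem a (hA haA))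
        ⟨a₀ * |f|, ⟨a₀, ha₀A, rfl⟩⟩
        ⟨b * |f|, hMmem b hbS, by rintro x ⟨a, haA, rfl⟩; exact hMmono _ _ (hbub a haA)⟩
    -- pointwise consequences for y
    have hy_lb : ∀ᵐ ω ∂μ, a₀ ω * |f ω| ≤ y ω := by
      filter_upwards [ae_le_of_le (hyub _ ⟨a₀, ha₀A, rfl⟩),
        AEEqFun.coeFn_mul a₀ |f|, AEEqFun.coeFn_abs f] with ω h1 h2 h3
      rw [h2, Pi.mul_apply, h3] at h1; exact h1
    have hy_ub : ∀ᵐ ω ∂μ, y ω ≤ b ω * |f ω| := by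
      filter_upwards [ae_le_of_le (hylub _ (hMmem b hbS)
          (by rintro x ⟨a, haA, rfl⟩; exact hMmono _ _ (hbub a haA))),
        AEEqFun.coeFn_mul b |f|, AEEqFun.coeFn_abs f] with ω h1 h2 h3
      rw [h2, Pi.mul_apply, h3] at h1; exact h1
    have hy0 : ∀ᵐ ω ∂μ, f ω = 0 → y ω = 0 := by
      filter_upwards [hy_lb, hy_ub] with ω h1 h2 hf0
      rw [hf0] at h1 h2; simp at h1 h2; linarith
    -- candidate supremum in L^∞(Ω_f)
    set g : Ω →ₘ[μ] ℝ := aeDiv |f| y with hg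
    have hgcoe : ∀ᵐ ω ∂μ, g ω = y ω / |f ω| := by
      filter_upwards [aeDiv_coeFn |f| y, AEEqFun.coeFn_abs f] with ω h1 h2
      rw [h1, h2]
    obtain ⟨⟨C₀, hC₀⟩, ha₀0⟩ := hA ha₀A
    obtain ⟨⟨Cb, hCb⟩, hb0⟩ := hbS
    have hgmem : g ∈ LinftySupport f := by
      constructor
      · refine ⟨|C₀| ⊔ |Cb|, ?_⟩
        filter_upwards [hgcoe, hy_lb, hy_ub, hC₀, hCb] with ω h1 h2 h3 h4 h5
        rcases eq_or_ne (f ω) 0 with hf0 | hf0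
        · rw [h1, hf0, abs_zero, div_zero, abs_zero]
          exact le_trans (abs_nonneg C₀) (le_max_left _ _)
        · have hfpos : 0 < |f ω| := abs_pos.mpr hf0
          rw [h1, abs_le]
          constructor
          · rw [le_div_iff₀ hfpos]
            calc -(|C₀| ⊔ |Cb|) * |f ω| ≤ a₀ ω * |f ω| := by
                  apply mul_le_mul_of_nonneg_right _ (abs_nonneg _)
                  have : -(|C₀| ⊔ |Cb|) ≤ -|C₀| := by simp [le_max_left]
                  refine this.trans ?_
                  have := (abs_le.mp (h4.trans (le_abs_self C₀))).1
                  linarith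
              _ ≤ y ω := h2
          · rw [div_le_iff₀ hfpos]
            calc y ω ≤ b ω * |f ω| := h3
              _ ≤ (|C₀| ⊔ |Cb|) * |f ω| := by
                  apply mul_le_mul_of_nonneg_right _ (abs_nonneg _)
                  exact ((le_abs_self _).trans (h5.trans (le_abs_self Cb))).trans
                    (le_max_right _ _)
      · filter_upwards [hgcoe] with ω h1 hf0
        rw [h1, hf0, abs_zero, div_zero]
    have hMg : g * |f| = y := by
      apply AEEqFun.ext
      filter_upwards [AEEqFun.coeFn_mul g |f|, AEEqFun.coeFn_abs f, hgcoe, hy0]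
        with ω h1 h2 h3 h4
      rw [h1, Pi.mul_apply, h2, h3]
      rcases eq_or_ne (f ω) 0 with hf0 | hf0
      · rw [hf0, h4 hf0]; simp
      · exact div_mul_cancel₀ _ (abs_ne_zero.mpr hf0)
    refine ⟨g, hgmem, ?_, ?_⟩
    · intro a haA
      obtain ⟨-, ha0⟩ := hA haA
      refine le_of_ae_le ?_
      have := ae_le_of_le (hyub _ ⟨a, haA, rfl⟩)
      filter_upwards [this, AEEqFun.coeFn_mul a |f|, AEEqFun.coeFn_abs f, hgcoe, ha0]
        with ω h1 h2 h3 h4 h5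
      rw [h2, Pi.mul_apply, h3] at h1
      rcases eq_or_ne (f ω) 0 with hf0 | hf0
      · rw [h4, h5 hf0, hf0, abs_zero, div_zero]
      · rw [h4, le_div_iff₀ (abs_pos.mpr hf0)]; exact h1
    · intro z hzS hzub
      have hz0 := hzS.2
      have hyz : y ≤ z * |f| := by
        refine hylub _ (hMmem z hzS) ?_
        rintro x ⟨a, haA, rfl⟩
        exact hMmono _ _ (hzub a haA)
      refine le_of_ae_le ?_
      filter_upwards [ae_le_of_le hyz, AEEqFun.coeFn_mul z |f|, AEEqFun.coeFn_abs f,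
        hgcoe, hz0] with ω h1 h2 h3 h4 h5
      rw [h2, Pi.mul_apply, h3] at h1
      rcases eq_or_ne (f ω) 0 with hf0 | hf0
      · rw [h4, h5 hf0, hf0, abs_zero, div_zero]
      · rw [h4, div_le_iff₀ (abs_pos.mpr hf0)]; exact h1
  · -- reverse direction
    intro hL A hA ⟨a₀, ha₀A⟩ ⟨b, hbX, hbub⟩
    set f : Ω →ₘ[μ] ℝ := |b| + |a₀| with hf
    have hbabs : |b| ∈ X.carrier := X.ideal_mem b hbX |b| (abs_abs_le b)
    have hfX : f ∈ X.carrier :=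
      X.add_mem hbabs (X.ideal_mem a₀ (hA ha₀A) |a₀| (abs_abs_le a₀))
    have hfcoe : ∀ᵐ ω ∂μ, f ω = |b ω| + |a₀ ω| := by
      filter_upwards [AEEqFun.coeFn_add |b| |a₀|, AEEqFun.coeFn_abs b,
        AEEqFun.coeFn_abs a₀] with ω h1 h2 h3
      rw [hf, h1, Pi.add_apply, h2, h3]
    have hfnn : ∀ᵐ ω ∂μ, 0 ≤ f ω := by
      filter_upwards [hfcoe] with ω h1
      rw [h1]; positivity
    have habs : ∀ a ∈ A, ∀ᵐ ω ∂μ, |(a ⊔ a₀) ω| ≤ f ω := by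
      intro a haA
      filter_upwards [AEEqFun.coeFn_sup a a₀, hfcoe, ae_le_of_le (hbub a haA)]
        with ω h1 h2 h3
      rw [h1, h2, abs_le]
      constructor
      · have h4 : -(|b ω| + |a₀ ω|) ≤ a₀ ω := by
          have := neg_abs_le (a₀ ω); have := abs_nonneg (b ω); linarith
        exact h4.trans le_sup_right
      · refine sup_le ?_ ?_
        · have := le_abs_self (b ω); have := abs_nonneg (a₀ ω); linarith
        · have := le_abs_self (a₀ ω); have := abs_nonneg (b ω); linarith
    -- the division map into L^∞(Ω_f)
    have hDmem : ∀ h : Ω →ₘ[μ] ℝ, (∀ᵐ ω ∂μ, |h ω| ≤ f ω) → aeDiv f h ∈ LinftySupport f := by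
      intro h hb'
      constructor
      · refine ⟨1, ?_⟩
        filter_upwards [aeDiv_coeFn f h, hb'] with ω h1 h2
        rw [h1]
        rcases eq_or_ne (f ω) 0 with hf0 | hf0
        · rw [hf0, div_zero, abs_zero]; exact zero_le_one
        · have hfpos : 0 < f ω := lt_of_le_of_ne ((abs_nonneg _).trans h2) (Ne.symm hf0)
          rw [abs_div, abs_of_pos hfpos, div_le_one hfpos]
          exact h2
      · filter_upwards [aeDiv_coeFn f h] with ω h1 hf0
        rw [h1, hf0, div_zero]
    set B : Set (Ω →ₘ[μ] ℝ) := (fun a => aeDiv f (a ⊔ a₀)) '' A with hB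
    have hBsub : B ⊆ LinftySupport f := by
      rintro x ⟨a, haA, rfl⟩; exact hDmem _ (habs a haA)
    have hDfmem : aeDiv f f ∈ LinftySupport f :=
      hDmem f (hfnn.mono fun ω h => le_of_eq (abs_of_nonneg h))
    have hDfub : ∀ x ∈ B, x ≤ aeDiv f f := by
      rintro x ⟨a, haA, rfl⟩
      refine le_of_ae_le ?_
      filter_upwards [aeDiv_coeFn f (a ⊔ a₀), aeDiv_coeFn f f, habs a haA, hfnn]
        with ω h1 h2 h3 h4
      rw [h1, h2]
      rcases eq_or_ne (f ω) 0 with hf0 | hf0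
      · rw [hf0, div_zero, div_zero]
      · have hfpos : 0 < f ω := lt_of_le_of_ne h4 (Ne.symm hf0)
        gcongr
        exact le_of_abs_le h3
    obtain ⟨g, hgS, hgub, hglub⟩ := hL f hfX B hBsub
      ⟨aeDiv f (a₀ ⊔ a₀), ⟨a₀, ha₀A, rfl⟩⟩ ⟨aeDiv f f, hDfmem, hDfub⟩
    obtain ⟨⟨C, hC⟩, hg0⟩ := hgS
    have hyX : g * f ∈ X.carrier := by
      refine mem_of_ae_abs_le X (X.smul_mem |C| hfX) _ ?_
      filter_upwards [AEEqFun.coeFn_mul g f, AEEqFun.coeFn_smul |C| f, hC, hfnn]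
        with ω h1 h2 h3 h4
      rw [h1, h2, Pi.mul_apply, Pi.smul_apply, smul_eq_mul, abs_mul, abs_mul, abs_abs]
      exact mul_le_mul_of_nonneg_right (h3.trans (le_abs_self C)) (abs_nonneg _)
    refine ⟨g * f, hyX, ?_, ?_⟩
    · intro a haA
      refine le_of_ae_le ?_
      filter_upwards [ae_le_of_le (hgub _ ⟨a, haA, rfl⟩), aeDiv_coeFn f (a ⊔ a₀),
        AEEqFun.coeFn_mul g f, AEEqFun.coeFn_sup a a₀, habs a haA, hfnn]
        with ω h1 h2 h3 h4 h5 h6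
      rw [h3, Pi.mul_apply]
      rw [h2, h4] at h1
      rw [h4] at h5
      rcases eq_or_ne (f ω) 0 with hf0 | hf0
      · rw [hf0, mul_zero]
        rw [hf0] at h5
        have := le_sup_left (a := a ω) (b := a₀ ω)
        have := le_of_abs_le h5
        linarith
      · calc a ω ≤ a ω ⊔ a₀ ω := le_sup_left
          _ = (a ω ⊔ a₀ ω) / f ω * f ω := (div_mul_cancel₀ _ hf0).symm
          _ ≤ g ω * f ω := mul_le_mul_of_nonneg_right h1 h6
    · intro z hzX hzub
      have hz'abs : ∀ᵐ ω ∂μ, |(z ⊓ f) ω| ≤ f ω := by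
        filter_upwards [AEEqFun.coeFn_inf z f, hfcoe, hfnn,
          ae_le_of_le (hzub a₀ ha₀A)] with ω h1 h2 h3 h4
        rw [h1, abs_le]
        constructor
        · refine le_inf ?_ (by linarith)
          have h5 := neg_abs_le (a₀ ω); have h6 := abs_nonneg (b ω)
          rw [h2]; linarith
        · exact inf_le_right
      have hDz'ub : ∀ x ∈ B, x ≤ aeDiv f (z ⊓ f) := by
        rintro x ⟨a, haA, rfl⟩
        refine le_of_ae_le ?_
        filter_upwards [aeDiv_coeFn f (a ⊔ a₀), aeDiv_coeFn f (z ⊓ f),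
          AEEqFun.coeFn_inf z f, AEEqFun.coeFn_sup a a₀, habs a haA, hfnn,
          ae_le_of_le (hzub a haA), ae_le_of_le (hzub a₀ ha₀A)]
          with ω h1 h2 h3 h4 h5 h6 h7 h8
        rw [h1, h2, h3]
        rcases eq_or_ne (f ω) 0 with hf0 | hf0
        · rw [hf0, div_zero, div_zero]
        · have hfpos : 0 < f ω := lt_of_le_of_ne h6 (Ne.symm hf0)
          gcongr
          rw [h4] at h5 ⊢
          exact le_inf (sup_le h7 h8) (le_of_abs_le h5)
      have hgz' : g ≤ aeDiv f (z ⊓ f) := hglub _ (hDmem _ hz'abs) hDz'ub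
      refine le_of_ae_le ?_
      filter_upwards [ae_le_of_le hgz', aeDiv_coeFn f (z ⊓ f), AEEqFun.coeFn_inf z f,
        AEEqFun.coeFn_mul g f, hfnn, hfcoe, ae_le_of_le (hzub a₀ ha₀A)]
        with ω h1 h2 h3 h4 h5 h6 h7
      rw [h4, Pi.mul_apply]
      rw [h2] at h1
      rcases eq_or_ne (f ω) 0 with hf0 | hf0
      · rw [hf0, mul_zero]
        have := neg_abs_le (a₀ ω); have := abs_nonneg (b ω); have := abs_nonneg (a₀ ω)
        rw [h6] at hf0
        linarith
      · calc g ω * f ω ≤ (z ⊓ f) ω / f ω * f ω := mul_le_mul_of_nonneg_right h1 h5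
          _ = (z ⊓ f) ω := div_mul_cancel₀ _ hf0
          _ ≤ z ω := by rw [h3]; exact inf_le_left
end

section
/- Let X be a Banach lattice of measurable functions on a measure space (Ω,Σ,μ). If the support Ω_f = {ω ∈ Ω : f(ω) ≠ 0} of every element f ∈ X is σ-finite (i.e., a countable union of sets of finite measure), then X is a complete lattice. -/
open MeasureTheory

variable {Ω : Type*} [MeasurableSpace Ω] {μ : MeasureTheory.Measure Ω}

/-!
Fix `a ∈ A` and an upper bound `b ∈ X`. The finite suprema of elements of `A` lying above `a`
form a sup-closed family in the order interval `[a, b]` with the same upper bounds as `A`, and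
`a = b` off the σ-finite support `S` of `b - a`. Let `ν` be a finite measure with the same null
sets as `μ` on `S`; `Φ f = ∫ arctan ∘ f dν` is bounded and monotone, so an increasing sequence
of the family nearly maximizes it, and its pointwise supremum `y` satisfies `Φ y = sup Φ`.
For `f` in the family, `Φ (f ⊔ y) ≤ Φ y` forces `f ≤ y` `ν`-a.e., hence `μ`-a.e. on `S`, while
off `S` everything equals `b`. So `y` is the least upper bound, and `a ≤ y ≤ b` puts it in `X`.
-/

open Filter Set Real
open scoped Topology ENNReal

section Order

variable {α : Type*} [SemilatticeSup α]

lemma upperBounds_supClosure_inter_Ici {s : Set α} {a : α} (ha : a ∈ s) :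
    upperBounds (supClosure s ∩ Ici a) = upperBounds s := by
  refine Subset.antisymm (fun z hz x hx => ?_) fun z hz x hx => ?_
  · exact le_sup_left.trans <| hz
      ⟨supClosed_supClosure (subset_supClosure hx) (subset_supClosure ha), le_sup_right⟩
  · exact (upperBounds_supClosure s ▸ hz) hx.1

lemma SupClosed.exists_monotone_tendsto_sSup_image {s : Set α} {Φ : α → ℝ} (hs : SupClosed s)
    (hne : s.Nonempty) (hΦ : MonotoneOn Φ s) (hbdd : BddAbove (Φ '' s)) :
    ∃ g : ℕ → α, Monotone g ∧ (∀ n, g n ∈ s) ∧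
      Tendsto (Φ ∘ g) atTop (𝓝 (sSup (Φ '' s))) := by
  obtain ⟨u, -, hu, hus⟩ := exists_seq_tendsto_sSup (hne.image Φ) hbdd
  choose f hfs hfu using hus
  have hg : ∀ n, partialSups f n ∈ s := fun n => by
    rw [partialSups_apply]
    exact hs.finsetSup'_mem _ fun i _ => hfs i
  refine ⟨partialSups f, (partialSups f).monotone, hg, ?_⟩
  refine tendsto_of_tendsto_of_tendsto_of_le_of_le (hu.congr fun n => (hfu n).symm)
    tendsto_const_nhds (fun n => ?_) fun n => le_csSup hbdd (mem_image_of_mem Φ (hg n))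
  exact hΦ (hfs n) (hg n) (le_partialSups f n)

end Order

lemma Real.norm_arctan_le (x : ℝ) : ‖arctan x‖ ≤ π / 2 :=
  abs_le.2 ⟨(neg_pi_div_two_lt_arctan x).le, (arctan_lt_pi_div_two x).le⟩

namespace MeasureTheory

section IntegralArctan

variable {ν : Measure Ω} [IsFiniteMeasure ν] {f g : Ω → ℝ}

lemma integrable_arctan_comp (hf : AEStronglyMeasurable f ν) :
    Integrable (fun ω => arctan (f ω)) ν :=
  .of_bound (continuous_arctan.comp_aestronglyMeasurable hf) (π / 2)
    (ae_of_all _ fun _ => norm_arctan_le _)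

lemma integral_arctan_le : ∫ ω, arctan (f ω) ∂ν ≤ π / 2 * ν.real univ :=
  (le_abs_self _).trans <|
    norm_integral_le_of_norm_le_const (ae_of_all _ fun _ => norm_arctan_le _)

lemma integral_arctan_mono (hf : AEStronglyMeasurable f ν) (hg : AEStronglyMeasurable g ν)
    (hfg : f ≤ᵐ[ν] g) : ∫ ω, arctan (f ω) ∂ν ≤ ∫ ω, arctan (g ω) ∂ν :=
  integral_mono_ae (integrable_arctan_comp hf) (integrable_arctan_comp hg)
    (hfg.mono fun _ h => arctan_strictMono.monotone h)

lemma ae_eq_of_ae_le_of_integral_arctan_le (hf : AEStronglyMeasurable f ν)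
    (hg : AEStronglyMeasurable g ν) (hfg : f ≤ᵐ[ν] g)
    (h : ∫ ω, arctan (g ω) ∂ν ≤ ∫ ω, arctan (f ω) ∂ν) : f =ᵐ[ν] g := by
  have hnonneg : 0 ≤ᵐ[ν] fun ω => arctan (g ω) - arctan (f ω) :=
    hfg.mono fun _ h => sub_nonneg.2 (arctan_strictMono.monotone h)
  have hint := (integrable_arctan_comp hg).sub (integrable_arctan_comp hf)
  have hzero : ∫ ω, arctan (g ω) - arctan (f ω) ∂ν = 0 := by
    rw [integral_sub (integrable_arctan_comp hg) (integrable_arctan_comp hf)]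
    linarith [integral_nonneg_of_ae hnonneg, integral_arctan_mono hf hg hfg]
  filter_upwards [(integral_eq_zero_iff_of_nonneg_ae hnonneg hint).1 hzero] with ω hω
  exact arctan_injective (sub_eq_zero.1 hω).symm

lemma tendsto_integral_arctan {F : ℕ → Ω → ℝ} (hF : ∀ n, AEStronglyMeasurable (F n) ν)
    (hlim : ∀ᵐ ω ∂ν, Tendsto (fun n => F n ω) atTop (𝓝 (f ω))) :
    Tendsto (fun n => ∫ ω, arctan (F n ω) ∂ν) atTop (𝓝 (∫ ω, arctan (f ω) ∂ν)) :=
  tendsto_integral_of_dominated_convergence (fun _ => π / 2)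
    (fun n => continuous_arctan.comp_aestronglyMeasurable (hF n)) (integrable_const _)
    (fun _ => ae_of_all _ fun _ => norm_arctan_le _)
    (hlim.mono fun _ h => (continuous_arctan.tendsto _).comp h)

end IntegralArctan

lemma sFinite_restrict_iUnion {s : ℕ → Set Ω} (hs : ∀ n, MeasurableSet (s n))
    (hfin : ∀ n, μ (s n) < ∞) : SFinite (μ.restrict (⋃ n, s n)) := by
  rw [← iUnion_disjointed, Measure.restrict_iUnion (disjoint_disjointed s) (.disjointed hs)]
  have (n : ℕ) : IsFiniteMeasure (μ.restrict (disjointed s n)) :=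
    isFiniteMeasure_restrict.2 ((measure_mono (disjointed_subset s n)).trans_lt (hfin n)).ne
  infer_instance

lemma exists_measurableSet_superset_sFinite_restrict {s : ℕ → Set Ω} (hs : ∀ n, μ (s n) < ∞) :
    ∃ S, MeasurableSet S ∧ ⋃ n, s n ⊆ S ∧ SFinite (μ.restrict S) :=
  ⟨⋃ n, toMeasurable μ (s n), .iUnion fun _ => measurableSet_toMeasurable _ _,
    iUnion_mono fun _ => subset_toMeasurable _ _,
    sFinite_restrict_iUnion (fun _ => measurableSet_toMeasurable _ _)
      fun n => (measure_toMeasurable (s n)).symm ▸ hs n⟩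

namespace AEEqFun

lemma exists_isLUB_range_of_monotone {g : ℕ → Ω →ₘ[μ] ℝ} (hg : Monotone g)
    (hbdd : BddAbove (range g)) :
    ∃ y : Ω →ₘ[μ] ℝ, IsLUB (range g) y ∧
      ∀ᵐ ω ∂μ, Tendsto (fun n => g n ω) atTop (𝓝 (y ω)) := by
  obtain ⟨b, hb⟩ := hbdd
  have hg_ae : ∀ᵐ ω ∂μ, Monotone (fun n => g n ω) ∧ ∀ n, g n ω ≤ b ω := by
    have hmono : ∀ᵐ ω ∂μ, ∀ n, g n ω ≤ g (n + 1) ω :=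
      ae_all_iff.2 fun n => coeFn_le.2 (hg n.le_succ)
    have hle : ∀ᵐ ω ∂μ, ∀ n, g n ω ≤ b ω :=
      ae_all_iff.2 fun n => coeFn_le.2 (hb (mem_range_self n))
    filter_upwards [hmono, hle] with ω h₁ h₂ using ⟨monotone_nat_of_le_succ h₁, h₂⟩
  set Y : Ω → ℝ := fun ω => ⨆ n, g n ω
  have hY : Measurable Y := .iSup fun n => (g n).measurable
  set y := AEEqFun.mk Y hY.aestronglyMeasurable
  have hlim : ∀ᵐ ω ∂μ, Tendsto (fun n => g n ω) atTop (𝓝 (y ω)) := by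
    filter_upwards [hg_ae, coeFn_mk Y hY.aestronglyMeasurable] with ω ⟨hω, hωb⟩ hy
    rw [hy]
    exact tendsto_atTop_ciSup hω ⟨b ω, forall_mem_range.2 hωb⟩
  refine ⟨y, ⟨forall_mem_range.2 fun n => coeFn_le.1 ?_, fun z hz => coeFn_le.1 ?_⟩, hlim⟩
  · filter_upwards [hg_ae, hlim] with ω ⟨hω, _⟩ hlim using hω.ge_of_tendsto hlim n
  · filter_upwards [ae_all_iff.2 fun n => coeFn_le.2 (hz (mem_range_self n)), hlim]
      with ω hz hlim using le_of_tendsto' hlim hz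

variable {S : Set Ω} {a b : Ω →ₘ[μ] ℝ} {B : Set (Ω →ₘ[μ] ℝ)}

lemma ae_eq_restrict_compl_of_support_sub_subset (hS : MeasurableSet S)
    (h : {ω | (b - a) ω ≠ 0} ⊆ S) : a =ᵐ[μ.restrict Sᶜ] b := by
  refine (ae_restrict_iff' hS.compl).2 ?_
  filter_upwards [coeFn_sub b a] with ω hω hωS
  have hba : (b - a) ω = 0 := not_not.1 fun hne => hωS (h hne)
  rw [hω, Pi.sub_apply, sub_eq_zero] at hba
  exact hba.symm

lemma exists_isLUB_of_supClosed_of_subset_Icc [SFinite (μ.restrict S)]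
    (hab : a =ᵐ[μ.restrict Sᶜ] b) (hne : B.Nonempty) (hB : SupClosed B)
    (hBab : B ⊆ Icc a b) : ∃ y, IsLUB B y := by
  set ν := (μ.restrict S).toFinite
  have hνμ : ν ≪ μ := (toFinite_absolutelyContinuous _).trans
    (Measure.absolutelyContinuous_of_le Measure.restrict_le_self)
  have hmeas (f : Ω →ₘ[μ] ℝ) : AEStronglyMeasurable f ν := f.aestronglyMeasurable.mono_ac hνμ
  set Φ : (Ω →ₘ[μ] ℝ) → ℝ := fun f => ∫ ω, arctan (f ω) ∂ν
  have hΦ_mono : Monotone Φ := fun f g hfg =>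
    integral_arctan_mono (hmeas f) (hmeas g) (hνμ.ae_le (coeFn_le.2 hfg))
  have hΦ_bdd : BddAbove (Φ '' B) :=
    ⟨π / 2 * ν.real univ, forall_mem_image.2 fun _ _ => integral_arctan_le⟩
  obtain ⟨g, hg_mono, hgB, hΦg⟩ :=
    hB.exists_monotone_tendsto_sSup_image hne (hΦ_mono.monotoneOn B) hΦ_bdd
  obtain ⟨y, hy, hgy⟩ := exists_isLUB_range_of_monotone hg_mono
    ⟨b, forall_mem_range.2 fun n => (hBab (hgB n)).2⟩
  have hΦy : Φ y = sSup (Φ '' B) :=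
    tendsto_nhds_unique (tendsto_integral_arctan (fun n => hmeas (g n)) (hνμ.ae_le hgy)) hΦg
  refine ⟨y, fun f hf => ?_, fun z hz => hy.2 (forall_mem_range.2 fun n => hz (hgB n))⟩
  have hlim : ∀ᵐ ω ∂μ, Tendsto (fun n => (f ⊔ g n) ω) atTop (𝓝 ((f ⊔ y) ω)) := by
    filter_upwards [ae_all_iff.2 fun n => coeFn_sup f (g n), hgy, coeFn_sup f y]
      with ω h₁ h₂ h₃
    simp only [h₁, h₃]
    exact tendsto_const_nhds.sup_nhds h₂
  have hΦfy : Φ (f ⊔ y) ≤ Φ y := hΦy ▸ le_of_tendsto'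
    (tendsto_integral_arctan (fun n => hmeas _) (hνμ.ae_le hlim))
    fun n => le_csSup hΦ_bdd (mem_image_of_mem Φ (hB hf (hgB n)))
  have hν : ∀ᵐ ω ∂ν, f ω ≤ y ω := by
    filter_upwards [ae_eq_of_ae_le_of_integral_arctan_le (hmeas y) (hmeas (f ⊔ y))
      (hνμ.ae_le (coeFn_le.2 le_sup_right)) hΦfy, hνμ.ae_le (coeFn_sup f y)] with ω h₁ h₂
    exact le_sup_left.trans_eq (h₂.symm.trans h₁.symm)
  have hSc : ∀ᵐ ω ∂μ.restrict Sᶜ, f ω ≤ y ω := by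
    filter_upwards [hab, ae_restrict_of_ae (coeFn_le.2 (hBab hf).2),
      ae_restrict_of_ae (coeFn_le.2 ((hBab (hgB 0)).1.trans (hy.1 (mem_range_self 0))))]
      with ω h₁ h₂ h₃
    exact h₂.trans (h₁ ▸ h₃)
  exact coeFn_le.1 <| ae_of_ae_restrict_of_ae_restrict_compl S
    ((absolutelyContinuous_toFinite _).ae_le hν) hSc

theorem exists_isLUB_of_mem_of_mem_upperBounds [SFinite (μ.restrict S)]
    (hab : a =ᵐ[μ.restrict Sᶜ] b) (ha : a ∈ B) (hb : b ∈ upperBounds B) : ∃ y, IsLUB B y := by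
  have hC : supClosure B ∩ Ici a ⊆ Icc a b := fun x hx =>
    ⟨hx.2, (upperBounds_supClosure B ▸ hb) hx.1⟩
  have hCsup : SupClosed (supClosure B ∩ Ici a) :=
    supClosed_supClosure.inter fun _ hx _ _ => mem_Ici.2 (le_sup_of_le_left hx)
  obtain ⟨y, hy⟩ := exists_isLUB_of_supClosed_of_subset_Icc (B := supClosure B ∩ Ici a) hab
    ⟨a, subset_supClosure ha, self_mem_Ici⟩ hCsup hC
  exact ⟨y, by rwa [IsLUB, upperBounds_supClosure_inter_Ici ha] at hy⟩

end AEEqFun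

end MeasureTheory

namespace BanachFunctionLattice

variable (X : BanachFunctionLattice Ω μ) {a b f g : Ω →ₘ[μ] ℝ}

lemma sub_mem (hf : f ∈ X.carrier) (hg : g ∈ X.carrier) : f - g ∈ X.carrier := by
  simpa [sub_eq_add_neg] using X.add_mem hf (X.smul_mem (-1) hg)

lemma mem_of_ae_abs_le (hg : g ∈ X.carrier) (h : ∀ᵐ ω ∂μ, |f ω| ≤ |g ω|) : f ∈ X.carrier :=
  X.ideal_mem g hg f <| AEEqFun.coeFn_le.1 <| by
    filter_upwards [AEEqFun.coeFn_abs f, AEEqFun.coeFn_abs g, h] with ω hf hg h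
    simpa [hf, hg] using h

lemma mem_of_le_of_le (ha : a ∈ X.carrier) (hb : b ∈ X.carrier) (haf : a ≤ f) (hfb : f ≤ b) :
    f ∈ X.carrier := by
  have hfa : f - a ∈ X.carrier := X.mem_of_ae_abs_le (X.sub_mem hb ha) <| by
    filter_upwards [AEEqFun.coeFn_le.2 haf, AEEqFun.coeFn_le.2 hfb, AEEqFun.coeFn_sub f a,
      AEEqFun.coeFn_sub b a] with ω h₁ h₂ hfa hba
    rw [hfa, hba, Pi.sub_apply, Pi.sub_apply, abs_of_nonneg (sub_nonneg.2 h₁),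
      abs_of_nonneg (sub_nonneg.2 (h₁.trans h₂))]
    exact sub_le_sub_right h₂ _
  simpa using X.add_mem ha hfa

end BanachFunctionLattice

/-- If the support of every element of `X` is `σ`-finite (a countable
union of sets of finite measure), then `X` is a complete lattice. -/
theorem hasLUBP_of_sigmaFinite_supports
    (X : BanachFunctionLattice Ω μ)
    (hσ : ∀ f ∈ X.carrier, ∃ s : ℕ → Set Ω,
      (∀ n, μ (s n) < ⊤) ∧ {ω | f ω ≠ 0} ⊆ ⋃ n, s n) :
    HasLUBP X.carrier := by
  rintro A hAX ⟨a, ha⟩ ⟨b, hb, hbA⟩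
  obtain ⟨s, hs_fin, hs_supp⟩ := hσ (b - a) (X.sub_mem hb (hAX ha))
  obtain ⟨S, hS, hsS, _⟩ := exists_measurableSet_superset_sFinite_restrict hs_fin
  obtain ⟨y, hy⟩ := AEEqFun.exists_isLUB_of_mem_of_mem_upperBounds
    (AEEqFun.ae_eq_restrict_compl_of_support_sub_subset hS (hs_supp.trans hsS)) ha hbA
  exact ⟨y, X.mem_of_le_of_le (hAX ha) hb (hy.1 ha) (hy.2 hbA), hy.1, fun z _ hz => hy.2 hz⟩
end

section
/- Let (X₀,X₁) be a couple of Banach lattices of measurable functions on a common measure space. If (X₀,X₁) is a positive Calderón couple, then (X₀,X₁) is a Calderón couple; moreover, if (X₀,X₁) is a positive C-Calderón couple for some C > 0, then it is a C-Calderón couple. -/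
open MeasureTheory

variable {Ω : Type*} [MeasurableSpace Ω] {μ : MeasureTheory.Measure Ω}

section SignAux

variable {Ω : Type*} [MeasurableSpace Ω] {μ : MeasureTheory.Measure Ω}

private lemma real_sign_mul_self (x : ℝ) : Real.sign x * x = |x| := by
  rcases lt_trichotomy x 0 with h|h|h
  · rw [Real.sign_of_neg h, abs_of_neg h]; ring
  · simp [h]
  · rw [Real.sign_of_pos h, abs_of_pos h]; ring

private lemma real_sign_mul_abs' (x : ℝ) : Real.sign x * |x| = x := by
  rcases lt_trichotomy x 0 with h|h|h
  · rw [Real.sign_of_neg h, abs_of_neg h]; ring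
  · simp [h]
  · rw [Real.sign_of_pos h, abs_of_pos h]; ring

private lemma abs_real_sign_mul_le (x y : ℝ) : |Real.sign x * y| ≤ |y| := by
  rw [abs_mul]
  rcases lt_trichotomy x 0 with h|h|h
  · simp [Real.sign_of_neg h]
  · simp [h]
  · simp [Real.sign_of_pos h]

private lemma measurable_real_sign : Measurable Real.sign := by
  have : Real.sign = fun x : ℝ => if x < 0 then (-1:ℝ) else if 0 < x then 1 else 0 := by
    funext x; rfl
  rw [this]
  exact Measurable.ite (measurableSet_lt measurable_id measurable_const) measurable_const
    (Measurable.ite (measurableSet_lt measurable_const measurable_id) measurable_const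
      measurable_const)

/-- The a.e.-class of the pointwise sign of `f`. -/
noncomputable def sgnAE (f : Ω →ₘ[μ] ℝ) : Ω →ₘ[μ] ℝ :=
  AEEqFun.mk (fun ω => Real.sign (f ω))
    ((measurable_real_sign.comp_aemeasurable f.aemeasurable).aestronglyMeasurable)

private lemma sgnAE_coeFn (f : Ω →ₘ[μ] ℝ) :
    ⇑(sgnAE f) =ᵐ[μ] fun ω => Real.sign (f ω) := AEEqFun.coeFn_mk _ _

private lemma sgnAE_mul_self (f : Ω →ₘ[μ] ℝ) : sgnAE f * f = |f| := by
  apply AEEqFun.ext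
  filter_upwards [AEEqFun.coeFn_mul (sgnAE f) f, sgnAE_coeFn f, AEEqFun.coeFn_abs f]
    with ω h1 h2 h3
  rw [h1, h3]; simp only [Pi.mul_apply]; rw [h2]; exact real_sign_mul_self _

private lemma sgnAE_mul_abs (f : Ω →ₘ[μ] ℝ) : sgnAE f * |f| = f := by
  apply AEEqFun.ext
  filter_upwards [AEEqFun.coeFn_mul (sgnAE f) |f|, sgnAE_coeFn f, AEEqFun.coeFn_abs f]
    with ω h1 h2 h3
  rw [h1]; simp only [Pi.mul_apply]; rw [h2, h3]; exact real_sign_mul_abs' _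

private lemma abs_sgnAE_mul_le (f h : Ω →ₘ[μ] ℝ) : |sgnAE f * h| ≤ |h| := by
  rw [← AEEqFun.coeFn_le]
  filter_upwards [AEEqFun.coeFn_abs (sgnAE f * h), AEEqFun.coeFn_abs h,
    AEEqFun.coeFn_mul (sgnAE f) h, sgnAE_coeFn f] with ω h1 h2 h3 h4
  rw [h1, h2, h3]; simp only [Pi.mul_apply]; rw [h4]; exact abs_real_sign_mul_le _ _

private lemma sgnAE_mul_add (σ h h' : Ω →ₘ[μ] ℝ) : σ * (h + h') = σ * h + σ * h' := by
  apply AEEqFun.ext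
  filter_upwards [AEEqFun.coeFn_mul σ (h + h'), AEEqFun.coeFn_add h h',
    AEEqFun.coeFn_add (σ * h) (σ * h'), AEEqFun.coeFn_mul σ h, AEEqFun.coeFn_mul σ h']
    with ω h1 h2 h3 h4 h5
  simp only [Pi.mul_apply, Pi.add_apply] at h1 h2 h3 h4 h5
  rw [h1, h3, h4, h5, h2]; ring

private lemma sgnAE_mul_smul (σ h : Ω →ₘ[μ] ℝ) (c : ℝ) : σ * (c • h) = c • (σ * h) := by
  apply AEEqFun.ext
  filter_upwards [AEEqFun.coeFn_mul σ (c • h), AEEqFun.coeFn_smul c h,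
    AEEqFun.coeFn_smul c (σ * h), AEEqFun.coeFn_mul σ h] with ω h1 h2 h3 h4
  simp only [Pi.mul_apply, Pi.smul_apply, smul_eq_mul] at h1 h2 h3 h4
  rw [h1, h3, h4, h2]; ring

end SignAux

section CoreAux

variable {Ω : Type*} [MeasurableSpace Ω] {μ : MeasureTheory.Measure Ω}

private lemma abs_nonneg_ae (f : Ω →ₘ[μ] ℝ) : (0 : Ω →ₘ[μ] ℝ) ≤ |f| := by
  rw [← AEEqFun.coeFn_le]
  filter_upwards [AEEqFun.coeFn_abs f, AEEqFun.coeFn_zero (α := Ω) (μ := μ) (β := ℝ)]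
    with ω h1 h2
  simp only [h1, h2, Pi.zero_apply]
  exact abs_nonneg _

private lemma sgn_mul_mem (X : BanachFunctionLattice Ω μ) (w h : Ω →ₘ[μ] ℝ)
    (hh : h ∈ X.carrier) : sgnAE w * h ∈ X.carrier :=
  X.ideal_mem h hh _ (abs_sgnAE_mul_le w h)

private lemma sgn_mul_norm_le (X : BanachFunctionLattice Ω μ) (w h : Ω →ₘ[μ] ℝ)
    (hh : h ∈ X.carrier) : X.norm (sgnAE w * h) ≤ X.norm h :=
  X.ideal_norm_le h hh _ (abs_sgnAE_mul_le w h)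

private lemma sgn_mul_mem_sumSet (X₀ X₁ : BanachFunctionLattice Ω μ) (w h : Ω →ₘ[μ] ℝ)
    (hh : h ∈ sumSet X₀.toFunctionSpace X₁.toFunctionSpace) :
    sgnAE w * h ∈ sumSet X₀.toFunctionSpace X₁.toFunctionSpace := by
  obtain ⟨a₀, ha₀, a₁, ha₁, rfl⟩ := hh
  exact ⟨sgnAE w * a₀, sgn_mul_mem X₀ w a₀ ha₀, sgnAE w * a₁, sgn_mul_mem X₁ w a₁ ha₁,
    sgnAE_mul_add _ _ _⟩

private lemma abs_mem_sumSet (X₀ X₁ : BanachFunctionLattice Ω μ) (f : Ω →ₘ[μ] ℝ)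
    (hf : f ∈ sumSet X₀.toFunctionSpace X₁.toFunctionSpace) :
    |f| ∈ sumSet X₀.toFunctionSpace X₁.toFunctionSpace := by
  rw [← sgnAE_mul_self]; exact sgn_mul_mem_sumSet X₀ X₁ f f hf

private lemma Kfun_sgn_le (X₀ X₁ : BanachFunctionLattice Ω μ) (t : ℝ) (ht : 0 < t)
    (w f : Ω →ₘ[μ] ℝ) (hf : f ∈ sumSet X₀.toFunctionSpace X₁.toFunctionSpace) :
    Kfun X₀.toFunctionSpace X₁.toFunctionSpace t (sgnAE w * f) ≤
      Kfun X₀.toFunctionSpace X₁.toFunctionSpace t f := by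
  obtain ⟨b₀, hb₀, b₁, hb₁, hfeq⟩ := hf
  refine le_csInf ⟨X₀.toFunctionSpace.norm b₀ + t * X₁.toFunctionSpace.norm b₁,
    b₀, hb₀, b₁, hb₁, hfeq, rfl⟩ ?_
  rintro r ⟨a₀, ha₀, a₁, ha₁, hfeq', rfl⟩
  have hbdd : BddBelow {r | ∃ a₀ ∈ X₀.toFunctionSpace.carrier,
      ∃ a₁ ∈ X₁.toFunctionSpace.carrier, sgnAE w * f = a₀ + a₁ ∧
      r = X₀.toFunctionSpace.norm a₀ + t * X₁.toFunctionSpace.norm a₁} := by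
    refine ⟨0, ?_⟩
    rintro s ⟨c₀, hc₀, c₁, hc₁, -, rfl⟩
    have h0 := X₀.norm_nonneg c₀ hc₀
    have h1 := X₁.norm_nonneg c₁ hc₁
    have := mul_nonneg ht.le h1
    show (0:ℝ) ≤ X₀.norm c₀ + t * X₁.norm c₁
    linarith
  refine le_trans (csInf_le hbdd ⟨sgnAE w * a₀, sgn_mul_mem X₀ w a₀ ha₀,
    sgnAE w * a₁, sgn_mul_mem X₁ w a₁ ha₁, by rw [hfeq', sgnAE_mul_add], rfl⟩) ?_
  have h0 := sgn_mul_norm_le X₀ w a₀ ha₀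
  have h1 := sgn_mul_norm_le X₁ w a₁ ha₁
  have h2 := mul_le_mul_of_nonneg_left h1 ht.le
  show X₀.norm _ + t * X₁.norm _ ≤ X₀.norm _ + t * X₁.norm _
  exact add_le_add h0 h2

private lemma Kfun_abs_eq (X₀ X₁ : BanachFunctionLattice Ω μ) (t : ℝ) (ht : 0 < t)
    (f : Ω →ₘ[μ] ℝ) (hf : f ∈ sumSet X₀.toFunctionSpace X₁.toFunctionSpace) :
    Kfun X₀.toFunctionSpace X₁.toFunctionSpace t |f| =
      Kfun X₀.toFunctionSpace X₁.toFunctionSpace t f := by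
  apply le_antisymm
  · rw [← sgnAE_mul_self f]; exact Kfun_sgn_le X₀ X₁ t ht f f hf
  · conv_lhs => rw [← sgnAE_mul_abs f]
    exact Kfun_sgn_le X₀ X₁ t ht f |f| (abs_mem_sumSet X₀ X₁ f hf)

private lemma core_transfer (X₀ X₁ : BanachFunctionLattice Ω μ) (f g : Ω →ₘ[μ] ℝ)
    (T : (Ω →ₘ[μ] ℝ) → (Ω →ₘ[μ] ℝ))
    (hT : IsBoundedCoupleOperator X₀.toFunctionSpace X₁.toFunctionSpace T)
    (hTfg : T |f| = |g|) :
    ∃ S, IsBoundedCoupleOperator X₀.toFunctionSpace X₁.toFunctionSpace S ∧ S f = g ∧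
      ∀ C : ℝ, 0 ≤ C → CoupleOperatorNormLE X₀.toFunctionSpace X₁.toFunctionSpace T C →
        CoupleOperatorNormLE X₀.toFunctionSpace X₁.toFunctionSpace S C := by
  obtain ⟨hadd, hsmul, hm0, hm1, ⟨C₀, hC₀⟩, ⟨C₁, hC₁⟩⟩ := hT
  refine ⟨fun h => sgnAE g * T (sgnAE f * h), ⟨?_, ?_, ?_, ?_, ?_, ?_⟩, ?_, ?_⟩
  · intro h hh h' hh'
    show sgnAE g * T (sgnAE f * (h + h')) = sgnAE g * T (sgnAE f * h) + sgnAE g * T (sgnAE f * h')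
    rw [sgnAE_mul_add (sgnAE f) h h',
      hadd _ (sgn_mul_mem_sumSet X₀ X₁ f h hh) _ (sgn_mul_mem_sumSet X₀ X₁ f h' hh'),
      sgnAE_mul_add]
  · intro c h hh
    show sgnAE g * T (sgnAE f * (c • h)) = c • (sgnAE g * T (sgnAE f * h))
    rw [sgnAE_mul_smul, hsmul c _ (sgn_mul_mem_sumSet X₀ X₁ f h hh), sgnAE_mul_smul]
  · intro h hh
    exact sgn_mul_mem X₀ g _ (hm0 _ (sgn_mul_mem X₀ f h hh))
  · intro h hh
    exact sgn_mul_mem X₁ g _ (hm1 _ (sgn_mul_mem X₁ f h hh))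
  · refine ⟨max C₀ 0, fun h hh => ?_⟩
    have h1 : X₀.norm (sgnAE g * T (sgnAE f * h)) ≤ X₀.norm (T (sgnAE f * h)) :=
      sgn_mul_norm_le X₀ g _ (hm0 _ (sgn_mul_mem X₀ f h hh))
    have h2 := hC₀ _ (sgn_mul_mem X₀ f h hh)
    have h3 := sgn_mul_norm_le X₀ f h hh
    have h4 := X₀.norm_nonneg _ (sgn_mul_mem X₀ f h hh)
    calc X₀.norm (sgnAE g * T (sgnAE f * h)) ≤ C₀ * X₀.norm (sgnAE f * h) := h1.trans h2
      _ ≤ max C₀ 0 * X₀.norm (sgnAE f * h) := mul_le_mul_of_nonneg_right (le_max_left _ _) h4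
      _ ≤ max C₀ 0 * X₀.norm h := mul_le_mul_of_nonneg_left h3 (le_max_right _ _)
  · refine ⟨max C₁ 0, fun h hh => ?_⟩
    have h1 : X₁.norm (sgnAE g * T (sgnAE f * h)) ≤ X₁.norm (T (sgnAE f * h)) :=
      sgn_mul_norm_le X₁ g _ (hm1 _ (sgn_mul_mem X₁ f h hh))
    have h2 := hC₁ _ (sgn_mul_mem X₁ f h hh)
    have h3 := sgn_mul_norm_le X₁ f h hh
    have h4 := X₁.norm_nonneg _ (sgn_mul_mem X₁ f h hh)
    calc X₁.norm (sgnAE g * T (sgnAE f * h)) ≤ C₁ * X₁.norm (sgnAE f * h) := h1.trans h2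
      _ ≤ max C₁ 0 * X₁.norm (sgnAE f * h) := mul_le_mul_of_nonneg_right (le_max_left _ _) h4
      _ ≤ max C₁ 0 * X₁.norm h := mul_le_mul_of_nonneg_left h3 (le_max_right _ _)
  · show sgnAE g * T (sgnAE f * f) = g
    rw [sgnAE_mul_self f, hTfg, sgnAE_mul_abs]
  · rintro C hC ⟨hT0, hT1⟩
    constructor
    · intro h hh
      have h1 : X₀.norm (sgnAE g * T (sgnAE f * h)) ≤ X₀.norm (T (sgnAE f * h)) :=
        sgn_mul_norm_le X₀ g _ (hm0 _ (sgn_mul_mem X₀ f h hh))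
      have h2 := hT0 _ (sgn_mul_mem X₀ f h hh)
      have h3 := sgn_mul_norm_le X₀ f h hh
      calc X₀.norm (sgnAE g * T (sgnAE f * h)) ≤ C * X₀.norm (sgnAE f * h) := h1.trans h2
        _ ≤ C * X₀.norm h := mul_le_mul_of_nonneg_left h3 hC
    · intro h hh
      have h1 : X₁.norm (sgnAE g * T (sgnAE f * h)) ≤ X₁.norm (T (sgnAE f * h)) :=
        sgn_mul_norm_le X₁ g _ (hm1 _ (sgn_mul_mem X₁ f h hh))
      have h2 := hT1 _ (sgn_mul_mem X₁ f h hh)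
      have h3 := sgn_mul_norm_le X₁ f h hh
      calc X₁.norm (sgnAE g * T (sgnAE f * h)) ≤ C * X₁.norm (sgnAE f * h) := h1.trans h2
        _ ≤ C * X₁.norm h := mul_le_mul_of_nonneg_left h3 hC

end CoreAux

/-- A positive Calderón couple of Banach lattices is a Calderón couple,
and a positive `C`-Calderón couple is a `C`-Calderón couple. -/
theorem isCalderonCouple_of_isPositiveCalderonCouple
    (X₀ X₁ : BanachFunctionLattice Ω μ) :
    (IsPositiveCalderonCouple X₀.toFunctionSpace X₁.toFunctionSpace →
      IsCalderonCouple X₀.toFunctionSpace X₁.toFunctionSpace) ∧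
    ∀ C : ℝ, 0 < C →
      IsPositiveCCalderonCouple X₀.toFunctionSpace X₁.toFunctionSpace C →
      IsCCalderonCouple X₀.toFunctionSpace X₁.toFunctionSpace C := by
  constructor
  · intro hp f hf g hg hK
    have hK' : ∀ t > 0, Kfun X₀.toFunctionSpace X₁.toFunctionSpace t |g| ≤
        Kfun X₀.toFunctionSpace X₁.toFunctionSpace t |f| := fun t ht => by
      rw [Kfun_abs_eq X₀ X₁ t ht g hg, Kfun_abs_eq X₀ X₁ t ht f hf]; exact hK t ht
    obtain ⟨T, hT, -, hTfg⟩ := hp |f| (abs_mem_sumSet X₀ X₁ f hf) |g|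
      (abs_mem_sumSet X₀ X₁ g hg) (abs_nonneg_ae f) (abs_nonneg_ae g) hK'
    obtain ⟨S, hS, hSf, -⟩ := core_transfer X₀ X₁ f g T hT hTfg
    exact ⟨S, hS, hSf⟩
  · intro C hC hp f hf g hg hK
    have hK' : ∀ t > 0, Kfun X₀.toFunctionSpace X₁.toFunctionSpace t |g| ≤
        Kfun X₀.toFunctionSpace X₁.toFunctionSpace t |f| := fun t ht => by
      rw [Kfun_abs_eq X₀ X₁ t ht g hg, Kfun_abs_eq X₀ X₁ t ht f hf]; exact hK t ht
    obtain ⟨T, hT, -, hTfg, hTC⟩ := hp |f| (abs_mem_sumSet X₀ X₁ f hf) |g|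
      (abs_mem_sumSet X₀ X₁ g hg) (abs_nonneg_ae f) (abs_nonneg_ae g) hK'
    obtain ⟨S, hS, hSf, hfac⟩ := core_transfer X₀ X₁ f g T hT hTfg
    exact ⟨S, hS, hSf, hfac C hC.le hTC⟩
end
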